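/- arXiv:math/0012244 — 4 statements merged into one kernel-verified Lean document; each statement's English description precedes it below -/
import Mathlib

section
/- Let R be a reduced irreducible root system with simple roots partitioned into long and short ones, and let ht_l and ht_s be the linear functions giving the sum of coefficients of long (resp. short) simple roots in the expansion of a vector in the simple root basis. If β is a positive long root, then the set S(s_β) of positive roots made negative by the reflection s_β consists of exactly 2·ht_l(β) − 1 long roots and exactly 2·Λ^{−1}·ht_s(β) short roots, where Λ is the squared-length ratio of long to short roots. -/
open scoped RealInnerProductSpace Classical

noncomputable section

variable {E : Type*} [NormedAddCommGroup E] [InnerProductSpace ℝ E]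

/-- A reduced irreducible root system in a Euclidean space. -/
structure RRS (E : Type*) [NormedAddCommGroup E] [InnerProductSpace ℝ E] : Type _ where
  roots : Finset E
  nonempty : roots.Nonempty
  span_eq : Submodule.span ℝ (roots : Set E) = ⊤
  ne_zero : ∀ α ∈ roots, α ≠ 0
  reflect_mem : ∀ α ∈ roots, ∀ β ∈ roots, β - (2 * ⟪β, α⟫ / ⟪α, α⟫) • α ∈ roots
  pairing_int : ∀ α ∈ roots, ∀ β ∈ roots, ∃ n : ℤ, 2 * ⟪β, α⟫ / ⟪α, α⟫ = (n : ℝ)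
  reduced : ∀ α ∈ roots, ∀ c : ℝ, c • α ∈ roots → c = 1 ∨ c = -1
  irreducible : ∀ s : Finset E, s ⊆ roots → s.Nonempty →
      (∀ α ∈ s, ∀ β ∈ roots, β ∉ s → ⟪α, β⟫ = 0) → s = roots

/-- The Cartan pairing `⟨β, α∨⟩ = 2(β,α)/(α,α)`. -/
def pairR (β α : E) : ℝ := 2 * ⟪β, α⟫ / ⟪α, α⟫

/-- The orthogonal reflection in (the hyperplane orthogonal to) `α`. -/
def reflMap (α x : E) : E := x - pairR x α • α

/-- `Δ` is a base of simple roots, with `coeff α γ` the coordinates of roots. -/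
def IsBase (R : RRS E) (Δ : Finset E) (coeff : E → E → ℤ) : Prop :=
  Δ ⊆ R.roots ∧ LinearIndependent ℝ (fun γ : (Δ : Set E) => (γ : E)) ∧
    (∀ α ∈ R.roots, α = ∑ γ ∈ Δ, (coeff α γ : ℝ) • γ) ∧
    (∀ α ∈ R.roots, (∀ γ ∈ Δ, 0 ≤ coeff α γ) ∨ (∀ γ ∈ Δ, coeff α γ ≤ 0))

/-- Positivity (all simple-root coordinates nonnegative). -/
def IsPos (Δ : Finset E) (coeff : E → E → ℤ) (α : E) : Prop := ∀ γ ∈ Δ, 0 ≤ coeff α γ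

/-- Height: the sum of the simple-root coordinates. -/
def htZ (Δ : Finset E) (coeff : E → E → ℤ) (α : E) : ℤ := ∑ γ ∈ Δ, coeff α γ

/-- Partial height: the sum of coordinates over simple roots satisfying `P`. -/
def htP (Δ : Finset E) (coeff : E → E → ℤ) (P : E → Prop) (α : E) : ℤ :=
  ∑ γ ∈ Δ.filter P, coeff α γ

/-- The result of applying the word of reflections `s_{γ_p} ⋯ s_{γ_1}` to `x`,
where `l = [γ_1, …, γ_p]`. -/
def wordMap (l : List E) (x : E) : E := l.foldl (fun y γ => reflMap γ y) x

/-- The chain of roots `α^(i) = s_{γ_1} ⋯ s_{γ_{i-1}} γ_i` (0-based `i`). -/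
def chainRoot (l : List E) (i : ℕ) : E := wordMap ((l.take i).reverse) (l.getD i 0)


namespace Stmt2Aux

variable {R : RRS E} {Δ : Finset E} {coeff : E → E → ℤ}

lemma inner_self_pos_of_mem {α : E} (h : α ∈ R.roots) : 0 < ⟪α, α⟫ := by
  have := R.ne_zero α h
  by_contra hc
  exact this (real_inner_self_nonpos.mp (not_lt.mp hc))

lemma inner_self_ne {α : E} (h : α ∈ R.roots) : ⟪α, α⟫ ≠ 0 :=
  ne_of_gt (inner_self_pos_of_mem h)

lemma pairR_self {b : E} (hb : ⟪b, b⟫ ≠ 0) : pairR b b = 2 := by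
  unfold pairR; field_simp

lemma pairR_smul_left (c : ℝ) (x b : E) : pairR (c • x) b = c * pairR x b := by
  unfold pairR; rw [real_inner_smul_left]; ring

lemma pairR_sub_left (x y b : E) : pairR (x - y) b = pairR x b - pairR y b := by
  unfold pairR; rw [inner_sub_left]; ring

lemma pairR_neg_left (x b : E) : pairR (-x) b = - pairR x b := by
  unfold pairR; rw [inner_neg_left]; ring

lemma pairR_sum_left {ι : Type*} (T : Finset ι) (f : ι → E) (b : E) :
    pairR (∑ x ∈ T, f x) b = ∑ x ∈ T, pairR (f x) b := by
  unfold pairR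
  rw [sum_inner]
  rw [Finset.mul_sum, Finset.sum_div]

lemma reflMap_mem {b x : E} (hb : b ∈ R.roots) (hx : x ∈ R.roots) :
    reflMap b x ∈ R.roots := R.reflect_mem b hb x hx

lemma neg_mem {x : E} (hx : x ∈ R.roots) : -x ∈ R.roots := by
  have h := R.reflect_mem x hx x hx
  have h2 : 2 * ⟪x, x⟫ / ⟪x, x⟫ = 2 := by
    rw [mul_div_assoc, div_self (inner_self_ne hx), mul_one]
  rw [h2] at h
  have h3 : x - (2:ℝ) • x = -x := by module
  rwa [h3] at h

lemma reflMap_self {b : E} (hb : ⟪b, b⟫ ≠ 0) : reflMap b b = -b := by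
  unfold reflMap; rw [pairR_self hb]; module

lemma reflMap_neg (b x : E) : reflMap b (-x) = - reflMap b x := by
  unfold reflMap; rw [pairR_neg_left]; module

lemma reflMap_reflMap {b : E} (hb : ⟪b, b⟫ ≠ 0) (x : E) :
    reflMap b (reflMap b x) = x := by
  unfold reflMap
  rw [pairR_sub_left, pairR_smul_left, pairR_self hb]
  module

lemma inner_reflMap {b : E} (hb : ⟪b, b⟫ ≠ 0) (x : E) :
    ⟪reflMap b x, reflMap b x⟫ = ⟪x, x⟫ := by
  unfold reflMap pairR
  rw [real_inner_sub_sub_self, real_inner_smul_right, real_inner_smul_left,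
    real_inner_smul_right, real_inner_comm b x]
  field_simp
  ring

lemma sub_reflMap (b x : E) : x - reflMap b x = pairR x b • b := by
  unfold reflMap; module

end Stmt2Aux

namespace Stmt2Aux

variable {R : RRS E} {Δ : Finset E} {coeff : E → E → ℤ}

lemma coeff_eq (hB : IsBase R Δ coeff) {c d : E → ℝ}
    (h : ∑ γ ∈ Δ, c γ • γ = ∑ γ ∈ Δ, d γ • γ) : ∀ γ ∈ Δ, c γ = d γ := by
  have hli := hB.2.1
  rw [Fintype.linearIndependent_iff] at hli
  have h0 : ∑ γ : (Δ : Set E), ((fun x => c x - d x) γ) • (γ : E) = 0 := by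
    have heq : ∑ γ : (Δ : Set E), ((fun x => c x - d x) γ) • (γ : E)
        = ∑ γ ∈ Δ, (c γ - d γ) • γ := Finset.sum_coe_sort Δ (fun γ => (c γ - d γ) • γ)
    rw [heq]
    simp only [sub_smul, Finset.sum_sub_distrib, h, sub_self]
  intro γ hγ
  have := hli (fun x => c x - d x) h0 ⟨γ, hγ⟩
  simpa [sub_eq_zero] using this

lemma rep (hB : IsBase R Δ coeff) {α : E} (hα : α ∈ R.roots) :
    α = ∑ γ ∈ Δ, (coeff α γ : ℝ) • γ := hB.2.2.1 α hα

lemma coeff_neg (hB : IsBase R Δ coeff) {α : E} (hα : α ∈ R.roots) :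
    ∀ γ ∈ Δ, coeff (-α) γ = - coeff α γ := by
  have h1 := rep hB (neg_mem hα)
  have h2 : -α = ∑ γ ∈ Δ, (-(coeff α γ) : ℝ) • γ := by
    nth_rewrite 1 [rep hB hα]
    rw [← Finset.sum_neg_distrib]
    exact Finset.sum_congr rfl fun γ _ => by module
  have := coeff_eq hB (h1 ▸ h2 ▸ rfl : (∑ γ ∈ Δ, ((coeff (-α) γ : ℝ)) • γ) = ∑ γ ∈ Δ, (-(coeff α γ) : ℝ) • γ)
  intro γ hγ
  have h3 := this γ hγ
  exact_mod_cast h3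

end Stmt2Aux

namespace Stmt2Aux

variable {R : RRS E} {Δ : Finset E} {coeff : E → E → ℤ}

lemma neg_coeff_of_not_pos (hB : IsBase R Δ coeff) {α : E} (hα : α ∈ R.roots)
    (h : ¬ IsPos Δ coeff α) : ∀ γ ∈ Δ, coeff α γ ≤ 0 :=
  (hB.2.2.2 α hα).resolve_left h

lemma isPos_neg_of_not_pos (hB : IsBase R Δ coeff) {α : E} (hα : α ∈ R.roots)
    (h : ¬ IsPos Δ coeff α) : IsPos Δ coeff (-α) := by
  intro γ hγ
  rw [coeff_neg hB hα γ hγ]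
  exact neg_nonneg.mpr (neg_coeff_of_not_pos hB hα h γ hγ)

lemma not_pos_neg (hB : IsBase R Δ coeff) {α : E} (hα : α ∈ R.roots)
    (h : IsPos Δ coeff α) : ¬ IsPos Δ coeff (-α) := by
  intro hneg
  apply R.ne_zero α hα
  have hz : ∀ γ ∈ Δ, coeff α γ = 0 := by
    intro γ hγ
    have h1 := h γ hγ
    have h2 := hneg γ hγ
    rw [coeff_neg hB hα γ hγ] at h2
    omega
  rw [rep hB hα]
  refine Finset.sum_eq_zero fun γ hγ => ?_
  rw [hz γ hγ]; simp

lemma coeff_simple (hB : IsBase R Δ coeff) {γ : E} (hγ : γ ∈ Δ) :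
    ∀ δ ∈ Δ, (coeff γ δ : ℝ) = if δ = γ then 1 else 0 := by
  have hrep := rep hB (hB.1 hγ)
  have h2 : γ = ∑ δ ∈ Δ, (if δ = γ then (1:ℝ) else 0) • δ := by
    simp [ite_smul, hγ]
  exact coeff_eq hB (hrep.symm.trans h2)

lemma simple_pos (hB : IsBase R Δ coeff) {γ : E} (hγ : γ ∈ Δ) : IsPos Δ coeff γ := by
  intro δ hδ
  have h := coeff_simple hB hγ δ hδ
  by_cases hd : δ = γ
  · rw [if_pos hd] at h
    have : coeff γ δ = 1 := by exact_mod_cast h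
    omega
  · rw [if_neg hd] at h
    have : coeff γ δ = 0 := by exact_mod_cast h
    omega

lemma coeff_reflMap (hB : IsBase R Δ coeff) {α b : E} (hα : α ∈ R.roots)
    (hb : b ∈ R.roots) {n : ℤ} (hn : pairR α b = (n : ℝ)) :
    ∀ γ ∈ Δ, coeff (reflMap b α) γ = coeff α γ - n * coeff b γ := by
  have hmem : reflMap b α ∈ R.roots := reflMap_mem hb hα
  have h1 := rep hB hmem
  have h2 : reflMap b α = ∑ γ ∈ Δ, ((coeff α γ : ℝ) - n * coeff b γ) • γ := by
    unfold reflMap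
    rw [hn]
    nth_rewrite 1 [rep hB hα]
    nth_rewrite 1 [rep hB hb]
    rw [Finset.smul_sum, ← Finset.sum_sub_distrib]
    exact Finset.sum_congr rfl fun γ _ => by module
  have := coeff_eq hB (h1.symm.trans h2)
  intro γ hγ
  exact_mod_cast this γ hγ

lemma pairR_int {α b : E} (hα : α ∈ R.roots) (hb : b ∈ R.roots) :
    ∃ n : ℤ, pairR α b = (n : ℝ) := R.pairing_int b hb α hα

lemma reflMap_simple_pos (hB : IsBase R Δ coeff) {γ α : E} (hγ : γ ∈ Δ)
    (hα : α ∈ R.roots) (hpos : IsPos Δ coeff α) (hne : α ≠ γ) :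
    IsPos Δ coeff (reflMap γ α) := by
  have hγR := hB.1 hγ
  obtain ⟨n, hn⟩ := pairR_int hα hγR
  by_cases hδ : ∀ δ ∈ Δ, δ ≠ γ → coeff α δ = 0
  · exfalso
    have hrep : α = (coeff α γ : ℝ) • γ := by
      conv_lhs => rw [rep hB hα]
      rw [Finset.sum_eq_single γ (fun δ hδΔ hδγ => by rw [hδ δ hδΔ hδγ]; simp)
        (fun hγΔ => absurd hγ hγΔ)]
    have := R.reduced γ hγR (coeff α γ : ℝ) (hrep ▸ hα)
    rcases this with h1 | h1
    · apply hne
      rw [hrep, h1, one_smul]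
    · have : (0:ℝ) ≤ (coeff α γ : ℝ) := by exact_mod_cast hpos γ hγ
      rw [h1] at this; linarith
  · push_neg at hδ
    obtain ⟨δ, hδΔ, hδγ, hc0⟩ := hδ
    have hcpos : 0 < coeff α δ := lt_of_le_of_ne (hpos δ hδΔ) (Ne.symm hc0)
    have hrc := coeff_reflMap hB hα hγR hn δ hδΔ
    have hγδ : coeff γ δ = 0 := by
      have := coeff_simple hB hγ δ hδΔ
      rw [if_neg hδγ] at this
      exact_mod_cast this
    rw [hγδ, mul_zero, sub_zero] at hrc
    by_contra hnp
    have := neg_coeff_of_not_pos hB (reflMap_mem hγR hα) hnp δ hδΔ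
    omega

end Stmt2Aux

namespace Stmt2Aux

variable {R : RRS E} {Δ : Finset E} {coeff : E → E → ℤ}

lemma sum_invol {T : Finset E} {f : E → E} (h1 : ∀ x ∈ T, f x ∈ T)
    (h2 : ∀ x ∈ T, f (f x) = x) (g : E → E) :
    ∑ x ∈ T, g (f x) = ∑ x ∈ T, g x :=
  Finset.sum_nbij' f f h1 h1 h2 h2 (fun _ _ => rfl)

/-- For a simple root `γ`, the pairing of the sum of positive roots of squared
length `L` against `γ` is `2` if `γ` has squared length `L`, else `0`. -/
lemma pairR_sigma (hB : IsBase R Δ coeff) {γ : E} (hγ : γ ∈ Δ) (L : ℝ) :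
    pairR (∑ α ∈ R.roots.filter (fun α => IsPos Δ coeff α ∧ ⟪α, α⟫ = L), α) γ
      = if ⟪γ, γ⟫ = L then 2 else 0 := by
  have hγR := hB.1 hγ
  have hγ0 : ⟪γ, γ⟫ ≠ 0 := inner_self_ne hγR
  set T := R.roots.filter (fun α => IsPos Δ coeff α ∧ ⟪α, α⟫ = L) with hT
  have hmemT : ∀ α, α ∈ T ↔ α ∈ R.roots ∧ IsPos Δ coeff α ∧ ⟪α, α⟫ = L := by
    intro α; simp [hT, Finset.mem_filter, and_assoc]
  -- key computation: ∑ (α - reflMap γ α) over T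
  have hkey : ∑ α ∈ T, (α - reflMap γ α) = pairR (∑ α ∈ T, α) γ • γ := by
    rw [pairR_sum_left, Finset.sum_smul]
    exact Finset.sum_congr rfl fun α _ => sub_reflMap γ α
  by_cases hlen : ⟪γ, γ⟫ = L
  · rw [if_pos hlen]
    have hγT : γ ∈ T := (hmemT γ).mpr ⟨hγR, simple_pos hB hγ, hlen⟩
    -- reflMap γ is an involution on T.erase γ
    have hmap : ∀ x ∈ T.erase γ, reflMap γ x ∈ T.erase γ := by
      intro x hx
      have hx' := Finset.mem_of_mem_erase hx
      have hxne := Finset.ne_of_mem_erase hx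
      obtain ⟨hxR, hxpos, hxlen⟩ := (hmemT x).mp hx'
      refine Finset.mem_erase.mpr ⟨?_, (hmemT _).mpr ⟨reflMap_mem hγR hxR,
        reflMap_simple_pos hB hγ hxR hxpos hxne, by rw [inner_reflMap hγ0, hxlen]⟩⟩
      intro hEq
      have : x = reflMap γ γ := by rw [← reflMap_reflMap hγ0 x, hEq]
      rw [reflMap_self hγ0] at this
      exact not_pos_neg hB hγR (simple_pos hB hγ) (this ▸ hxpos)
    have hinv : ∀ x ∈ T.erase γ, reflMap γ (reflMap γ x) = x :=
      fun x _ => reflMap_reflMap hγ0 x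
    have e1 : ∑ α ∈ T.erase γ, reflMap γ α = ∑ α ∈ T.erase γ, α :=
      sum_invol hmap hinv (fun x => x)
    have hsum : ∑ α ∈ T, reflMap γ α = (∑ α ∈ T, α) - 2 • γ := by
      rw [← Finset.add_sum_erase T (fun α => reflMap γ α) hγT,
        ← Finset.add_sum_erase T (fun α => α) hγT, e1, reflMap_self hγ0]
      module
    rw [Finset.sum_sub_distrib, hsum] at hkey
    have : (2:ℝ) • γ = pairR (∑ α ∈ T, α) γ • γ := by
      rw [← hkey]; module
    have h2 := smul_left_injective ℝ (R.ne_zero γ hγR) this.symm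
    rw [h2]
  · rw [if_neg hlen]
    have hmap : ∀ x ∈ T, reflMap γ x ∈ T := by
      intro x hx
      obtain ⟨hxR, hxpos, hxlen⟩ := (hmemT x).mp hx
      have hxne : x ≠ γ := fun h => hlen (h ▸ hxlen)
      exact (hmemT _).mpr ⟨reflMap_mem hγR hxR,
        reflMap_simple_pos hB hγ hxR hxpos hxne, by rw [inner_reflMap hγ0, hxlen]⟩
    have hsum : ∑ α ∈ T, reflMap γ α = ∑ α ∈ T, α :=
      sum_invol hmap (fun x _ => reflMap_reflMap hγ0 x) (fun x => x)
    rw [Finset.sum_sub_distrib, hsum, sub_self] at hkey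
    have : (0:ℝ) • γ = pairR (∑ α ∈ T, α) γ • γ := by
      rw [← hkey]; module
    have h2 := smul_left_injective ℝ (R.ne_zero γ hγR) this.symm
    rw [h2]

end Stmt2Aux

namespace Stmt2Aux

variable {R : RRS E} {Δ : Finset E} {coeff : E → E → ℤ}

/-- Pairing of the length-`L` positive-root sum against any root `β`. -/
lemma inner_sigma_root (hB : IsBase R Δ coeff) {β : E} (hβ : β ∈ R.roots) (L : ℝ) :
    ⟪(∑ α ∈ R.roots.filter (fun α => IsPos Δ coeff α ∧ ⟪α, α⟫ = L), α), β⟫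
      = L * (htP Δ coeff (fun γ => ⟪γ, γ⟫ = L) β : ℝ) := by
  set σ := ∑ α ∈ R.roots.filter (fun α => IsPos Δ coeff α ∧ ⟪α, α⟫ = L), α with hσ
  have hrep := rep hB hβ
  have h1 : ⟪σ, β⟫ = ∑ γ ∈ Δ, (coeff β γ : ℝ) * ⟪σ, γ⟫ := by
    conv_lhs => rw [hrep]
    rw [inner_sum]
    exact Finset.sum_congr rfl fun γ _ => real_inner_smul_right σ γ _
  have h2 : ∀ γ ∈ Δ, ⟪σ, γ⟫ = if ⟪γ, γ⟫ = L then L else 0 := by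
    intro γ hγ
    have hp := pairR_sigma hB hγ L
    have hγ0 := inner_self_ne (hB.1 hγ)
    have he : ⟪σ, γ⟫ = pairR σ γ * ⟪γ, γ⟫ / 2 := by
      unfold pairR; field_simp
    rw [he, hp]
    by_cases hc : ⟪γ, γ⟫ = L
    · rw [if_pos hc, if_pos hc, hc]; ring
    · rw [if_neg hc, if_neg hc]; ring
  have h3 : ∀ γ ∈ Δ, (coeff β γ : ℝ) * ⟪σ, γ⟫
      = if ⟪γ, γ⟫ = L then L * (coeff β γ : ℝ) else 0 := by
    intro γ hγ
    rw [h2 γ hγ]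
    split <;> ring
  rw [h1, Finset.sum_congr rfl h3, ← Finset.sum_filter]
  unfold htP
  push_cast
  rw [Finset.mul_sum]

end Stmt2Aux

namespace Stmt2Aux

variable {R : RRS E} {Δ : Finset E} {coeff : E → E → ℤ}

/-- If `β` is a long positive root and `α ∈ S(s_β)` with `α ≠ β`, then `⟨α, β∨⟩ = 1`. -/
lemma pairR_eq_one (hB : IsBase R Δ coeff) {Λ : ℤ} {a : ℝ} (hΛ : Λ = 2 ∨ Λ = 3)
    (ha : 0 < a) (hlen : ∀ α ∈ R.roots, ⟪α, α⟫ = a ∨ ⟪α, α⟫ = (Λ : ℝ) * a)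
    {β : E} (hβ : β ∈ R.roots) (hβpos : IsPos Δ coeff β) (hβlong : ⟪β, β⟫ = (Λ : ℝ) * a)
    {α : E} (hα : α ∈ R.roots) (hαpos : IsPos Δ coeff α)
    (hαneg : ¬ IsPos Δ coeff (reflMap β α)) (hne : α ≠ β) :
    pairR α β = 1 := by
  have hβ0 : ⟪β, β⟫ ≠ 0 := inner_self_ne hβ
  have hα0 : (0:ℝ) < ⟪α, α⟫ := inner_self_pos_of_mem hα
  have hβ0' : (0:ℝ) < ⟪β, β⟫ := inner_self_pos_of_mem hβ
  obtain ⟨n, hn⟩ := pairR_int hα hβ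
  obtain ⟨m, hm⟩ := pairR_int hβ hα
  -- n ≥ 1
  have hn1 : 1 ≤ n := by
    by_contra hc
    push_neg at hc
    have hle : n ≤ 0 := by omega
    apply hαneg
    intro γ hγ
    rw [coeff_reflMap hB hα hβ hn γ hγ]
    nlinarith [hαpos γ hγ, hβpos γ hγ]
  -- basic inner product identities
  have hin : 2 * ⟪α, β⟫ = (n : ℝ) * ⟪β, β⟫ := by
    have : pairR α β * ⟪β, β⟫ = (n : ℝ) * ⟪β, β⟫ := by rw [hn]
    unfold pairR at this
    field_simp at this
    linarith
  have him : 2 * ⟪α, β⟫ = (m : ℝ) * ⟪α, α⟫ := by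
    have : pairR β α * ⟪α, α⟫ = (m : ℝ) * ⟪α, α⟫ := by rw [hm]
    unfold pairR at this
    rw [real_inner_comm α β] at this
    field_simp at this
    linarith
  -- Cauchy-Schwarz bound:  n * m ≤ 4
  have hcs := real_inner_mul_inner_self_le α β
  have hnm4 : (n : ℝ) * m ≤ 4 := by
    have h4 : ((n:ℝ) * ⟪β, β⟫) * ((m:ℝ) * ⟪α, α⟫) = (2 * ⟪α, β⟫) * (2 * ⟪α, β⟫) := by
      rw [← hin, ← him]
    have h5 : (n : ℝ) * m * (⟪α, α⟫ * ⟪β, β⟫) = 4 * (⟪α, β⟫ * ⟪α, β⟫) := by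
      linear_combination h4
    nlinarith [h5, hcs, mul_pos hα0 hβ0']
  have hnm4' : n * m ≤ 4 := by exact_mod_cast hnm4
  -- length comparison:  ⟪α,α⟫ ≤ ⟪β,β⟫
  have hΛ1 : (1:ℝ) ≤ (Λ : ℝ) := by rcases hΛ with h | h <;> rw [h] <;> norm_num
  have hab : ⟪α, α⟫ ≤ ⟪β, β⟫ := by
    rcases hlen α hα with h | h <;> rw [h, hβlong] <;> nlinarith
  -- m ≥ n
  have hn1' : (1:ℝ) ≤ (n : ℝ) := by exact_mod_cast hn1
  have hmn : n ≤ m := by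
    have : (n : ℝ) ≤ (m : ℝ) := by nlinarith [hin, him, hab, hα0, hn1']
    exact_mod_cast this
  have hnn : n * n ≤ 4 := by nlinarith
  have hle2 : n ≤ 2 := by nlinarith
  have hn2 : n = 1 ∨ n = 2 := by omega
  rcases hn2 with h1 | h2
  · rw [hn, h1]; norm_num
  · exfalso
    have hm2 : m = 2 := by
      rw [h2] at hnm4' hmn
      omega
    have hip : ⟪α, β⟫ = ⟪β, β⟫ := by rw [h2] at hin; push_cast at hin; linarith
    have hip2 : ⟪α, α⟫ = ⟪β, β⟫ := by
      rw [hm2] at him; push_cast at him; linarith [hip]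
    have : ⟪α - β, α - β⟫ = 0 := by
      rw [real_inner_sub_sub_self]; linarith
    have h0 : α - β = 0 := inner_self_eq_zero.mp this
    exact hne (sub_eq_zero.mp h0)

end Stmt2Aux

namespace Stmt2Aux

variable {R : RRS E} {Δ : Finset E} {coeff : E → E → ℤ}

/-- Step A+B+C: the pairing of the length-`L` positive-root sum against `β` measures
twice the sum over `S(s_β)` of length-`L` roots. -/
lemma sum_S (hB : IsBase R Δ coeff) {β : E} (hβ : β ∈ R.roots) (L : ℝ) :
    pairR (∑ α ∈ R.roots.filter (fun α => IsPos Δ coeff α ∧ ⟪α, α⟫ = L), α) β • β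
      = (2:ℝ) • ∑ α ∈ R.roots.filter (fun α => IsPos Δ coeff α ∧
          ¬ IsPos Δ coeff (reflMap β α) ∧ ⟪α, α⟫ = L), α := by
  have hβ0 : ⟪β, β⟫ ≠ 0 := inner_self_ne hβ
  set T := R.roots.filter (fun α => IsPos Δ coeff α ∧ ⟪α, α⟫ = L) with hT
  set S := R.roots.filter (fun α => IsPos Δ coeff α ∧
      ¬ IsPos Δ coeff (reflMap β α) ∧ ⟪α, α⟫ = L) with hS
  have hmemT : ∀ α, α ∈ T ↔ α ∈ R.roots ∧ IsPos Δ coeff α ∧ ⟪α, α⟫ = L := by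
    intro α; simp [hT, Finset.mem_filter, and_assoc]
  have hmemS : ∀ α, α ∈ S ↔ α ∈ R.roots ∧ IsPos Δ coeff α ∧
      ¬ IsPos Δ coeff (reflMap β α) ∧ ⟪α, α⟫ = L := by
    intro α; simp [hS, Finset.mem_filter, and_assoc]
  have hST : S ⊆ T := by
    intro x hx
    obtain ⟨h1, h2, _, h4⟩ := (hmemS x).mp hx
    exact (hmemT x).mpr ⟨h1, h2, h4⟩
  have hkey : ∑ α ∈ T, (α - reflMap β α) = pairR (∑ α ∈ T, α) β • β := by
    rw [pairR_sum_left, Finset.sum_smul]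
    exact Finset.sum_congr rfl fun α _ => sub_reflMap β α
  -- on T \ S, reflMap β is an involution
  have hmapTS : ∀ x ∈ T \ S, reflMap β x ∈ T \ S := by
    intro x hx
    rw [Finset.mem_sdiff] at hx
    obtain ⟨hxT, hxS⟩ := hx
    obtain ⟨hxR, hxpos, hxlen⟩ := (hmemT x).mp hxT
    have hrpos : IsPos Δ coeff (reflMap β x) := by
      by_contra hc
      exact hxS ((hmemS x).mpr ⟨hxR, hxpos, hc, hxlen⟩)
    have hrR : reflMap β x ∈ R.roots := reflMap_mem hβ hxR
    rw [Finset.mem_sdiff]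
    constructor
    · exact (hmemT _).mpr ⟨hrR, hrpos, by rw [inner_reflMap hβ0, hxlen]⟩
    · intro hc
      obtain ⟨_, _, hneg, _⟩ := (hmemS _).mp hc
      rw [reflMap_reflMap hβ0] at hneg
      exact hneg hxpos
  have hTS0 : ∑ α ∈ T \ S, (α - reflMap β α) = 0 := by
    rw [Finset.sum_sub_distrib,
      sum_invol hmapTS (fun x _ => reflMap_reflMap hβ0 x) (fun x => x), sub_self]
  -- on S, x ↦ -reflMap β x is an involution
  have hmapS : ∀ x ∈ S, -reflMap β x ∈ S := by
    intro x hx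
    obtain ⟨hxR, hxpos, hxneg, hxlen⟩ := (hmemS x).mp hx
    have hrR : reflMap β x ∈ R.roots := reflMap_mem hβ hxR
    refine (hmemS _).mpr ⟨neg_mem hrR, isPos_neg_of_not_pos hB hrR hxneg, ?_, ?_⟩
    · rw [reflMap_neg, reflMap_reflMap hβ0]
      exact not_pos_neg hB hxR hxpos
    · rw [inner_neg_neg, inner_reflMap hβ0, hxlen]
  have hinvS : ∀ x ∈ S, -reflMap β (-reflMap β x) = x := by
    intro x _
    rw [reflMap_neg, reflMap_reflMap hβ0, neg_neg]
  have hsumS : ∑ α ∈ S, reflMap β α = - ∑ α ∈ S, α := by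
    have h1 : ∑ α ∈ S, (fun x => -x) (-reflMap β α) = ∑ α ∈ S, (fun x => -x) α := by
      exact sum_invol hmapS hinvS (fun x => -x)
    simp only [neg_neg] at h1
    rw [h1, ← Finset.sum_neg_distrib]
  have hsplit : ∑ α ∈ T, (α - reflMap β α) = ∑ α ∈ S, (α - reflMap β α) := by
    rw [← Finset.sum_sdiff hST, hTS0, zero_add]
  rw [hsplit, Finset.sum_sub_distrib, hsumS, sub_neg_eq_add] at hkey
  rw [← hkey]
  module

end Stmt2Aux

namespace Stmt2Aux

variable {R : RRS E} {Δ : Finset E} {coeff : E → E → ℤ}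

lemma mem_S {β : E} {L : ℝ} {x : E} :
    x ∈ R.roots.filter (fun α => IsPos Δ coeff α ∧
        ¬ IsPos Δ coeff (reflMap β α) ∧ ⟪α, α⟫ = L)
      ↔ x ∈ R.roots ∧ IsPos Δ coeff x ∧ ¬ IsPos Δ coeff (reflMap β x) ∧ ⟪x, x⟫ = L := by
  simp [Finset.mem_filter, and_assoc]

lemma neg_reflMap_mem_S (hB : IsBase R Δ coeff) {β : E} (hβ : β ∈ R.roots) {L : ℝ} {x : E}
    (hx : x ∈ R.roots.filter (fun α => IsPos Δ coeff α ∧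
        ¬ IsPos Δ coeff (reflMap β α) ∧ ⟪α, α⟫ = L)) :
    -reflMap β x ∈ R.roots.filter (fun α => IsPos Δ coeff α ∧
        ¬ IsPos Δ coeff (reflMap β α) ∧ ⟪α, α⟫ = L) := by
  have hβ0 : ⟪β, β⟫ ≠ 0 := inner_self_ne hβ
  obtain ⟨hxR, hxpos, hxneg, hxlen⟩ := mem_S.mp hx
  have hrR : reflMap β x ∈ R.roots := reflMap_mem hβ hxR
  refine mem_S.mpr ⟨neg_mem hrR, isPos_neg_of_not_pos hB hrR hxneg, ?_, ?_⟩
  · rw [reflMap_neg, reflMap_reflMap hβ0]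
    exact not_pos_neg hB hxR hxpos
  · rw [inner_neg_neg, inner_reflMap hβ0, hxlen]

/-- Pairing sum over a `β`-paired set. -/
lemma sum_paired {β : E} {S' : Finset E} (hmap : ∀ x ∈ S', β - x ∈ S') :
    (2:ℝ) • ∑ x ∈ S', x = (S'.card : ℝ) • β := by
  have hinv : ∀ x ∈ S', β - (β - x) = x := fun x _ => by abel
  have h1 : ∑ x ∈ S', (β - x) = ∑ x ∈ S', x := sum_invol hmap hinv (fun x => x)
  have h2 : ∑ x ∈ S', x + ∑ x ∈ S', (β - x) = ∑ x ∈ S', β := by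
    rw [← Finset.sum_add_distrib]
    exact Finset.sum_congr rfl fun x _ => by abel
  rw [h1] at h2
  rw [Finset.sum_const] at h2
  rw [← Nat.cast_smul_eq_nsmul ℝ] at h2
  rw [two_smul]
  exact h2

end Stmt2Aux

namespace Stmt2Aux

variable {R : RRS E} {Δ : Finset E} {coeff : E → E → ℤ}

lemma two_smul_sum_S_long (hB : IsBase R Δ coeff) {Λ : ℤ} {a : ℝ} (hΛ : Λ = 2 ∨ Λ = 3)
    (ha : 0 < a) (hlen : ∀ α ∈ R.roots, ⟪α, α⟫ = a ∨ ⟪α, α⟫ = (Λ : ℝ) * a)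
    {β : E} (hβ : β ∈ R.roots) (hβpos : IsPos Δ coeff β) (hβlong : ⟪β, β⟫ = (Λ : ℝ) * a) :
    (2:ℝ) • ∑ x ∈ R.roots.filter (fun α => IsPos Δ coeff α ∧
        ¬ IsPos Δ coeff (reflMap β α) ∧ ⟪α, α⟫ = (Λ : ℝ) * a), x
      = (((R.roots.filter (fun α => IsPos Δ coeff α ∧
          ¬ IsPos Δ coeff (reflMap β α) ∧ ⟪α, α⟫ = (Λ : ℝ) * a)).card : ℝ) + 1) • β := by
  have hβ0 : ⟪β, β⟫ ≠ 0 := inner_self_ne hβ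
  set S := R.roots.filter (fun α => IsPos Δ coeff α ∧
      ¬ IsPos Δ coeff (reflMap β α) ∧ ⟪α, α⟫ = (Λ : ℝ) * a) with hS
  have hβS : β ∈ S := by
    refine mem_S.mpr ⟨hβ, hβpos, ?_, hβlong⟩
    rw [reflMap_self hβ0]
    exact not_pos_neg hB hβ hβpos
  have hmap' : ∀ x ∈ S.erase β, β - x ∈ S.erase β := by
    intro x hx
    have hxS := Finset.mem_of_mem_erase hx
    have hxne := Finset.ne_of_mem_erase hx
    obtain ⟨hxR, hxpos, hxneg, hxlen⟩ := mem_S.mp hxS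
    have h1 : pairR x β = 1 := pairR_eq_one hB hΛ ha hlen hβ hβpos hβlong hxR hxpos hxneg hxne
    have h2 : -reflMap β x = β - x := by
      unfold reflMap; rw [h1]; module
    have h3 : β - x ∈ S := h2 ▸ neg_reflMap_mem_S hB hβ hxS
    refine Finset.mem_erase.mpr ⟨?_, h3⟩
    intro h
    exact R.ne_zero x hxR (by rwa [sub_eq_self] at h)
  have hpaired := sum_paired hmap'
  have hsplit : ∑ x ∈ S, x = β + ∑ x ∈ S.erase β, x :=
    (Finset.add_sum_erase S (fun x => x) hβS).symm
  have hcard : ((S.erase β).card : ℝ) = (S.card : ℝ) - 1 := by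
    have := Finset.card_erase_add_one hβS
    push_cast [← this]
    ring
  rw [hsplit, smul_add, hpaired, hcard]
  module

lemma two_smul_sum_S_short (hB : IsBase R Δ coeff) {Λ : ℤ} {a : ℝ} (hΛ : Λ = 2 ∨ Λ = 3)
    (ha : 0 < a) (hlen : ∀ α ∈ R.roots, ⟪α, α⟫ = a ∨ ⟪α, α⟫ = (Λ : ℝ) * a)
    {β : E} (hβ : β ∈ R.roots) (hβpos : IsPos Δ coeff β) (hβlong : ⟪β, β⟫ = (Λ : ℝ) * a) :
    (2:ℝ) • ∑ x ∈ R.roots.filter (fun α => IsPos Δ coeff α ∧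
        ¬ IsPos Δ coeff (reflMap β α) ∧ ⟪α, α⟫ = a), x
      = (((R.roots.filter (fun α => IsPos Δ coeff α ∧
          ¬ IsPos Δ coeff (reflMap β α) ∧ ⟪α, α⟫ = a)).card : ℝ)) • β := by
  have hβ0 : ⟪β, β⟫ ≠ 0 := inner_self_ne hβ
  have hΛ2 : (2:ℝ) ≤ (Λ : ℝ) := by rcases hΛ with h | h <;> rw [h] <;> norm_num
  set S := R.roots.filter (fun α => IsPos Δ coeff α ∧
      ¬ IsPos Δ coeff (reflMap β α) ∧ ⟪α, α⟫ = a) with hS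
  have hmap' : ∀ x ∈ S, β - x ∈ S := by
    intro x hx
    obtain ⟨hxR, hxpos, hxneg, hxlen⟩ := mem_S.mp hx
    have hxne : x ≠ β := by
      intro h
      rw [h, hβlong] at hxlen
      nlinarith
    have h1 : pairR x β = 1 := pairR_eq_one hB hΛ ha hlen hβ hβpos hβlong hxR hxpos hxneg hxne
    have h2 : -reflMap β x = β - x := by
      unfold reflMap; rw [h1]; module
    exact h2 ▸ neg_reflMap_mem_S hB hβ hx
  exact sum_paired hmap'

end Stmt2Aux


/-- for a positive long root `β`, the set `S(s_β)` of positive roots made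
negative by `s_β` contains exactly `2·ht_l(β) − 1` long roots and `2·Λ⁻¹·ht_s(β)` short
roots (the latter stated as `Λ · #short = 2·ht_s(β)`). -/
theorem stmt2 (R : RRS E) (Δ : Finset E) (coeff : E → E → ℤ) (hB : IsBase R Δ coeff)
    (Λ : ℤ) (a : ℝ) (hΛ : Λ = 2 ∨ Λ = 3) (ha : 0 < a)
    (hlen : ∀ α ∈ R.roots, ⟪α, α⟫ = a ∨ ⟪α, α⟫ = (Λ : ℝ) * a)
    (β : E) (hβ : β ∈ R.roots) (hβpos : IsPos Δ coeff β) (hβlong : ⟪β, β⟫ = (Λ : ℝ) * a) :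
    (((R.roots.filter (fun α => IsPos Δ coeff α ∧ ¬ IsPos Δ coeff (reflMap β α) ∧
          ⟪α, α⟫ = (Λ : ℝ) * a)).card : ℤ)
        = 2 * htP Δ coeff (fun γ => ⟪γ, γ⟫ = (Λ : ℝ) * a) β - 1) ∧
    (Λ * ((R.roots.filter (fun α => IsPos Δ coeff α ∧ ¬ IsPos Δ coeff (reflMap β α) ∧
          ⟪α, α⟫ = a)).card : ℤ)
        = 2 * htP Δ coeff (fun γ => ⟪γ, γ⟫ = a) β) := by
  have hβ0 : ⟪β, β⟫ ≠ 0 := Stmt2Aux.inner_self_ne hβ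
  have hβne : β ≠ 0 := R.ne_zero β hβ
  have hΛ0 : (Λ : ℝ) ≠ 0 := by rcases hΛ with h | h <;> rw [h] <;> norm_num
  have ha0 : a ≠ 0 := ne_of_gt ha
  constructor
  · -- long roots
    have hA := Stmt2Aux.sum_S hB hβ ((Λ : ℝ) * a)
    have hBl := Stmt2Aux.two_smul_sum_S_long hB hΛ ha hlen hβ hβpos hβlong
    have hEq := smul_left_injective ℝ hβne (hA.trans hBl)
    have hσ := Stmt2Aux.inner_sigma_root hB hβ ((Λ : ℝ) * a)
    have hp : pairR (∑ α ∈ R.roots.filter (fun α => IsPos Δ coeff α ∧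
          ⟪α, α⟫ = (Λ : ℝ) * a), α) β
        = 2 * (htP Δ coeff (fun γ => ⟪γ, γ⟫ = (Λ : ℝ) * a) β : ℝ) := by
      unfold pairR
      rw [hσ, hβlong]
      field_simp
    rw [hp] at hEq
    have hfin : (((R.roots.filter (fun α => IsPos Δ coeff α ∧
          ¬ IsPos Δ coeff (reflMap β α) ∧ ⟪α, α⟫ = (Λ : ℝ) * a)).card : ℝ))
        = 2 * (htP Δ coeff (fun γ => ⟪γ, γ⟫ = (Λ : ℝ) * a) β : ℝ) - 1 := by
      linarith [hEq]
    exact_mod_cast hfin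
  · -- short roots
    have hA := Stmt2Aux.sum_S hB hβ a
    have hBs := Stmt2Aux.two_smul_sum_S_short hB hΛ ha hlen hβ hβpos hβlong
    have hEq := smul_left_injective ℝ hβne (hA.trans hBs)
    have hσ := Stmt2Aux.inner_sigma_root hB hβ a
    have hp : pairR (∑ α ∈ R.roots.filter (fun α => IsPos Δ coeff α ∧
          ⟪α, α⟫ = a), α) β
        = 2 * a * (htP Δ coeff (fun γ => ⟪γ, γ⟫ = a) β : ℝ) / ((Λ : ℝ) * a) := by
      unfold pairR
      rw [hσ, hβlong]
      ring
    rw [hp] at hEq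
    have hfin : (Λ : ℝ) * (((R.roots.filter (fun α => IsPos Δ coeff α ∧
          ¬ IsPos Δ coeff (reflMap β α) ∧ ⟪α, α⟫ = a)).card : ℝ))
        = 2 * (htP Δ coeff (fun γ => ⟪γ, γ⟫ = a) β : ℝ) := by
      rw [← hEq]
      field_simp
    exact_mod_cast hfin

end
end

section
/- Let R be a reduced irreducible root system, β a long root, α a short root and γ any root such that ⟨α,β∨⟩ > 0 and ⟨γ,β∨⟩ > 0. Then ⟨γ,α∨⟩ ≥ 0; moreover, if γ is short and α + γ ≠ β, then ⟨γ,α∨⟩ > 0. -/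
open scoped RealInnerProductSpace Classical

noncomputable section

variable {E : Type*} [NormedAddCommGroup E] [InnerProductSpace ℝ E]

/-!
Since `β` is long and `α` is short, Cauchy–Schwarz forces `⟨α,β∨⟩ = 1`, so that `δ = β - α` is a
short vector. Write `k = ⟨γ,β∨⟩ ≥ 1` and `m = ⟨γ,α∨⟩`; then `2(γ,δ) = (kΛ - m)·|α|²`. Comparing
with `|γ|² + |δ|² ≥ 2(γ,δ)`, in which equality holds only for `γ = δ`, rules out `m ≤ -1`, and
for short `γ` with `m = 0` leaves only `γ = δ`, i.e. `α + γ = β`.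
-/

lemma pairR_of_inner_self_eq_zero {x y : E} (hy : ⟪y, y⟫ = 0) : pairR x y = 0 := by
  rw [pairR, hy, div_zero]

lemma two_mul_inner_eq_pairR_mul {x y : E} (hy : ⟪y, y⟫ ≠ 0) :
    2 * ⟪x, y⟫ = pairR x y * ⟪y, y⟫ := by
  rw [pairR, div_mul_cancel₀ _ hy]

lemma eq_of_inner_self_add_inner_self_le {x y : E} (h : ⟪x, x⟫ + ⟪y, y⟫ ≤ 2 * ⟪x, y⟫) :
    x = y := by
  rw [← sub_eq_zero, ← real_inner_self_nonpos, real_inner_sub_sub_self]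
  linarith

lemma pairR_eq_one_of_two_mul_inner_self_le {α β : E} (hαβ : 2 * ⟪α, α⟫ ≤ ⟪β, β⟫)
    (hint : ∃ n : ℤ, pairR α β = n) (hpos : 0 < pairR α β) : pairR α β = 1 := by
  obtain ⟨n, hn⟩ := hint
  have hβ : ⟪β, β⟫ ≠ 0 := fun h => hpos.ne' (pairR_of_inner_self_eq_zero h)
  have hβpos : 0 < ⟪β, β⟫ := lt_of_le_of_ne real_inner_self_nonneg hβ.symm
  have hinner : 2 * ⟪α, β⟫ = n * ⟪β, β⟫ := hn ▸ two_mul_inner_eq_pairR_mul hβ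
  have hn2 : (n : ℝ) ^ 2 * ⟪β, β⟫ ^ 2 ≤ 2 * ⟪β, β⟫ ^ 2 :=
    calc (n : ℝ) ^ 2 * ⟪β, β⟫ ^ 2 = 4 * (⟪α, β⟫ * ⟪α, β⟫) := by rw [← mul_pow, ← hinner]; ring
      _ ≤ 4 * (⟪α, α⟫ * ⟪β, β⟫) := by linarith [real_inner_mul_inner_self_le α β]
      _ ≤ 2 * ⟪β, β⟫ ^ 2 := by nlinarith
  have hn1 : n = 1 := by
    have : 0 < n := by rw [hn] at hpos; exact_mod_cast hpos
    have : n ^ 2 ≤ 2 := by exact_mod_cast le_of_mul_le_mul_right hn2 (by positivity)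
    nlinarith
  rw [hn, hn1, Int.cast_one]

lemma inner_sub_self_of_pairR_eq_one {α β : E} (h : pairR α β = 1) :
    ⟪β - α, β - α⟫ = ⟪α, α⟫ := by
  have hβ : ⟪β, β⟫ ≠ 0 := fun h0 => by simp [pairR_of_inner_self_eq_zero h0] at h
  have hinner : 2 * ⟪α, β⟫ = ⟪β, β⟫ := by rw [two_mul_inner_eq_pairR_mul hβ, h, one_mul]
  rw [real_inner_sub_sub_self, real_inner_comm α β]
  linarith

namespace RRS

variable (R : RRS E) {α β : E}

lemma exists_int_pairR (hα : α ∈ R.roots) (hβ : β ∈ R.roots) : ∃ n : ℤ, pairR α β = n :=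
  R.pairing_int β hβ α hα

lemma one_le_pairR_of_pos (hα : α ∈ R.roots) (hβ : β ∈ R.roots) (h : 0 < pairR α β) :
    1 ≤ pairR α β := by
  obtain ⟨n, hn⟩ := R.exists_int_pairR hα hβ
  rw [hn] at h ⊢
  exact_mod_cast (show (0 : ℤ) < n by exact_mod_cast h)

lemma pairR_le_neg_one_of_neg (hα : α ∈ R.roots) (hβ : β ∈ R.roots) (h : pairR α β < 0) :
    pairR α β ≤ -1 := by
  obtain ⟨n, hn⟩ := R.exists_int_pairR hα hβ
  rw [hn] at h ⊢
  have : n < 0 := by exact_mod_cast h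
  exact_mod_cast (show n ≤ -1 by omega)

end RRS

/-- if `β` is long, `α` is short, `⟨α,β∨⟩ > 0` and `⟨γ,β∨⟩ > 0`, then
`⟨γ,α∨⟩ ≥ 0`; moreover if `γ` is short and `α + γ ≠ β` then `⟨γ,α∨⟩ > 0`. -/
theorem stmt3 (R : RRS E) (Λ a : ℝ) (hΛ : Λ = 2 ∨ Λ = 3) (ha : 0 < a)
    (hlen : ∀ α ∈ R.roots, ⟪α, α⟫ = a ∨ ⟪α, α⟫ = Λ * a)
    (β α γ : E) (hβ : β ∈ R.roots) (hα : α ∈ R.roots) (hγ : γ ∈ R.roots)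
    (hβl : ⟪β, β⟫ = Λ * a) (hαs : ⟪α, α⟫ = a)
    (h1 : 0 < pairR α β) (h2 : 0 < pairR γ β) :
    0 ≤ pairR γ α ∧ ((⟪γ, γ⟫ = a ∧ α + γ ≠ β) → 0 < pairR γ α) := by
  have hΛ2 : 2 ≤ Λ := by rcases hΛ with rfl | rfl <;> norm_num
  have hαβ : pairR α β = 1 :=
    pairR_eq_one_of_two_mul_inner_self_le (by rw [hαs, hβl]; nlinarith)
      (R.exists_int_pairR hα hβ) h1
  have hkΛ : Λ ≤ pairR γ β * Λ :=
    le_mul_of_one_le_left (by linarith) (R.one_le_pairR_of_pos hγ hβ h2)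
  have hδ : ⟪β - α, β - α⟫ = a := (inner_sub_self_of_pairR_eq_one hαβ).trans hαs
  have hγδ : 2 * ⟪γ, β - α⟫ = (pairR γ β * Λ - pairR γ α) * a := by
    rw [inner_sub_right, mul_sub, two_mul_inner_eq_pairR_mul (hβl ▸ (mul_pos (by linarith) ha).ne'),
      two_mul_inner_eq_pairR_mul (hαs ▸ ha.ne'), hβl, hαs]
    ring
  have hm : 0 ≤ pairR γ α := by
    by_contra! hneg
    have hm1 := R.pairR_le_neg_one_of_neg hγ hα hneg
    have hγγ : ⟪γ, γ⟫ ≤ Λ * a := by rcases hlen γ hγ with h | h <;> nlinarith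
    have hγeq : γ = β - α := by
      refine eq_of_inner_self_add_inner_self_le ?_
      rw [hδ, hγδ]
      nlinarith
    have hγδ' : ⟪γ, β - α⟫ = a := by rw [hγeq, hδ]
    nlinarith
  refine ⟨hm, fun ⟨hγs, hne⟩ => hm.lt_of_ne' fun hm0 => hne ?_⟩
  have hγeq : γ = β - α :=
    eq_of_inner_self_add_inner_self_le (by rw [hγs, hδ, hγδ, hm0]; nlinarith)
  rw [hγeq, add_sub_cancel]

end
end

section
/- Let R be a reduced irreducible non-simply-laced root system with highest root θ and squared-length ratio Λ. If α is a short root with (α,θ∨) ≠ 0 such that Λα − θ is a positive root, then ht_l(α) = (ht_l(θ) + 1)/Λ. -/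
open scoped RealInnerProductSpace Classical

noncomputable section

variable {E : Type*} [NormedAddCommGroup E] [InnerProductSpace ℝ E]

/-!
Let `P` be the set of positive roots of the length of `θ`. A simple reflection `s_γ` permutes
`P ∖ {γ}` and negates `⟪γ, ·⟫`, so `∑_{r ∈ P} ⟪γ, r⟫` is `⟪γ, γ⟫` for a long simple root `γ` and
`0` for a short one; expanding a root `x` in the base gives `∑_{r ∈ P} ⟪x, r⟫ = ⟪θ, θ⟫ ht_l(x)`.
It therefore suffices to show `∑_{r ∈ P} ⟪β, r⟫ = ⟪β, β⟫` for `β = Λα - θ`, i.e. `ht_l(β) = 1`.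

Integrality and Cauchy–Schwarz give `⟨α, θ∨⟩ = 1`, so `β` is long and `⟨β, θ∨⟩ = Λ - 2`. For
`r ∈ P ∖ {θ}` one has `⟨r, θ∨⟩ ∈ {0, 1}` since `θ` is highest, and `|⟨β, r∨⟩| ≤ 1` if `r ≠ β`.
With `⟨β, r∨⟩ = Λ ⟨α, r∨⟩ - ⟨θ, r∨⟩` this forces `⟪β, r⟫ = 0` when `r ⊥ θ`, and `⟨β, r∨⟩ = -1`
when `Λ = 3` and `⟨r, θ∨⟩ = 1`. The roots with `⟨r, θ∨⟩ = 1` are permuted by `r ↦ θ - r`, which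
pins down their contribution to the sum.
-/

section Reflection

lemma inner_reflMap_right {γ : E} (hγ : γ ≠ 0) (x : E) : ⟪γ, reflMap γ x⟫ = -⟪γ, x⟫ := by
  have := (inner_self_ne_zero (𝕜 := ℝ)).mpr hγ
  simp only [reflMap, pairR, inner_sub_right, real_inner_smul_right, real_inner_comm x γ]
  field_simp
  ring

lemma reflMap_reflMap {γ : E} (hγ : γ ≠ 0) (x : E) : reflMap γ (reflMap γ x) = x := by
  have hpair : pairR (reflMap γ x) γ = -pairR x γ := by
    rw [pairR, real_inner_comm, inner_reflMap_right hγ, pairR, real_inner_comm]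
    ring
  rw [reflMap, hpair, reflMap]
  module

lemma inner_reflMap_reflMap {γ : E} (hγ : γ ≠ 0) (x y : E) :
    ⟪reflMap γ x, reflMap γ y⟫ = ⟪x, y⟫ := by
  have := (inner_self_ne_zero (𝕜 := ℝ)).mpr hγ
  simp only [reflMap, pairR, inner_sub_left, inner_sub_right, real_inner_smul_left,
    real_inner_smul_right, real_inner_comm y γ]
  field_simp
  ring

lemma reflMap_self {γ : E} (hγ : γ ≠ 0) : reflMap γ γ = -γ := by
  have := (inner_self_ne_zero (𝕜 := ℝ)).mpr hγ
  rw [reflMap, pairR, mul_div_assoc, div_self this]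
  module

lemma pairR_eq_of_two_inner_eq {x r : E} {n : ℤ} (hr : r ≠ 0) (hn : 2 * ⟪x, r⟫ = n * ⟪r, r⟫) :
    pairR x r = n := by
  rw [pairR, hn, mul_div_assoc, div_self ((inner_self_ne_zero (𝕜 := ℝ)).mpr hr), mul_one]

lemma abs_le_one_of_two_inner_eq {r s : E} {n : ℤ} (hs : ⟪s, s⟫ = ⟪r, r⟫) (hsr : s ≠ r)
    (hsr' : s ≠ -r) (hn : 2 * ⟪s, r⟫ = n * ⟪r, r⟫) : |n| ≤ 1 := by
  have hr : r ≠ 0 := by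
    rintro rfl
    exact hsr ((inner_self_eq_zero (𝕜 := ℝ)).mp (by rw [hs, inner_zero_left]))
  have hL := real_inner_self_pos.mpr hr
  have hnorm : ⟪s - ((n : ℝ) / 2) • r, s - ((n : ℝ) / 2) • r⟫ = ⟪r, r⟫ * (1 - (n : ℝ) ^ 2 / 4) := by
    simp only [inner_sub_left, inner_sub_right, real_inner_smul_left, real_inner_smul_right,
      real_inner_comm s r, hs]
    linear_combination (-(n : ℝ) / 2) * hn
  have hn4 : (n : ℝ) ^ 2 ≤ 4 := by nlinarith [real_inner_self_nonneg (x := s - ((n : ℝ) / 2) • r)]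
  have hn2 : -2 ≤ n ∧ n ≤ 2 :=
    abs_le_of_sq_le_sq' (by exact_mod_cast (by linarith : (n : ℝ) ^ 2 ≤ 2 ^ 2)) (by norm_num)
  rw [abs_le]
  by_contra hbig
  have hs' : s = ((n : ℝ) / 2) • r := by
    rw [← sub_eq_zero, ← inner_self_eq_zero (𝕜 := ℝ), hnorm]
    obtain rfl | rfl : n = 2 ∨ n = -2 := by omega
    all_goals norm_num
  obtain rfl | rfl : n = 2 ∨ n = -2 := by omega
  · exact hsr (by simpa using hs')
  · exact hsr' (by norm_num [hs'])

end Reflection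

namespace RRS

variable (R : RRS E) {r x γ : E}

lemma reflMap_mem (hγ : γ ∈ R.roots) (hr : r ∈ R.roots) : reflMap γ r ∈ R.roots :=
  R.reflect_mem γ hγ r hr

lemma neg_mem (hr : r ∈ R.roots) : -r ∈ R.roots :=
  reflMap_self (R.ne_zero r hr) ▸ R.reflMap_mem hr hr

lemma exists_two_inner_eq (hx : x ∈ R.roots) (hr : r ∈ R.roots) :
    ∃ n : ℤ, 2 * ⟪x, r⟫ = n * ⟪r, r⟫ := by
  obtain ⟨n, hn⟩ := R.pairing_int r hr x hx
  refine ⟨n, ?_⟩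
  rw [← hn, div_mul_cancel₀ _ ((inner_self_ne_zero (𝕜 := ℝ)).mpr (R.ne_zero r hr))]

lemma two_inner_eq_of_smul_sub_mem {Λ : ℤ} {a : ℝ} (hΛ : Λ = 2 ∨ Λ = 3)
    (ha : 0 < a) (hlen : ∀ α ∈ R.roots, ⟪α, α⟫ = a ∨ ⟪α, α⟫ = (Λ : ℝ) * a)
    {θ α : E} (hθ : θ ∈ R.roots) (hθlong : ⟪θ, θ⟫ = (Λ : ℝ) * a)
    (hα : α ∈ R.roots) (hαs : ⟪α, α⟫ = a) (hne : ⟪α, θ⟫ ≠ 0)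
    (hroot : (Λ : ℝ) • α - θ ∈ R.roots) : 2 * ⟪α, θ⟫ = Λ * a := by
  obtain ⟨t, ht⟩ := R.exists_two_inner_eq hα hθ
  rw [hθlong] at ht
  have hΛ2 : (2 : ℝ) ≤ Λ := by rcases hΛ with rfl | rfl <;> norm_num
  have hCS := real_inner_mul_inner_self_le α θ
  rw [hαs, hθlong] at hCS
  have ht2 : (t : ℝ) ^ 2 * Λ ≤ 4 := by
    have hsq : ((t : ℝ) ^ 2 * Λ) * (Λ * a ^ 2) = 4 * (⟪α, θ⟫ * ⟪α, θ⟫) := by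
      linear_combination (-(2 * ⟪α, θ⟫ + t * (Λ * a))) * ht
    refine le_of_mul_le_mul_right (a := Λ * a ^ 2) ?_ (by positivity)
    linarith
  have ht1 : t ^ 2 ≤ 2 := by exact_mod_cast (by nlinarith : (t : ℝ) ^ 2 ≤ 2)
  have ht0 : t ≠ 0 := by
    rintro rfl
    exact hne (by simpa using ht)
  obtain rfl | rfl : t = 1 ∨ t = -1 := by
    have : -1 ≤ t ∧ t ≤ 1 := by constructor <;> nlinarith
    omega
  · simpa using ht
  · have hββ : ⟪(Λ : ℝ) • α - θ, (Λ : ℝ) • α - θ⟫ = (2 * Λ + 1) * (Λ * a) := by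
      simp only [inner_sub_left, inner_sub_right, real_inner_smul_left, real_inner_smul_right,
        hαs, hθlong, real_inner_comm α θ]
      push_cast at ht
      linear_combination (-(Λ : ℝ)) * ht
    exfalso
    rcases hΛ with rfl | rfl <;> rcases hlen _ hroot with h | h <;> rw [hββ] at h <;>
      push_cast at h <;> linarith

end RRS

def posRootsOfLen (R : RRS E) (Δ : Finset E) (coeff : E → E → ℤ) (L : ℝ) : Finset E :=
  R.roots.filter fun r => IsPos Δ coeff r ∧ ⟪r, r⟫ = L

@[simp]
lemma mem_posRootsOfLen {R : RRS E} {Δ : Finset E} {coeff : E → E → ℤ} {L : ℝ} {r : E} :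
    r ∈ posRootsOfLen R Δ coeff L ↔ r ∈ R.roots ∧ IsPos Δ coeff r ∧ ⟪r, r⟫ = L :=
  Finset.mem_filter

namespace IsBase

variable {R : RRS E} {Δ : Finset E} {coeff : E → E → ℤ} (hB : IsBase R Δ coeff)
include hB

lemma coeff_eq_of_eq_sum {x : E} (hx : x ∈ R.roots) (c : E → ℝ)
    (h : x = ∑ γ ∈ Δ, c γ • γ) : ∀ γ ∈ Δ, (coeff x γ : ℝ) = c γ := by
  have hsum : ∑ γ : (Δ : Set E), ((coeff x γ : ℝ) - c γ) • (γ : E) = 0 := by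
    rw [Finset.sum_finset_coe (fun γ => ((coeff x γ : ℝ) - c γ) • γ) Δ]
    simp only [sub_smul, Finset.sum_sub_distrib, ← hB.2.2.1 x hx, ← h, sub_self]
  intro γ hγ
  exact sub_eq_zero.mp
    (linearIndependent_iff'.mp hB.2.1 Finset.univ _ hsum ⟨γ, hγ⟩ (Finset.mem_univ _))

lemma coeff_smul_add_smul {u v w : E} (hu : u ∈ R.roots) (hv : v ∈ R.roots) (hw : w ∈ R.roots)
    (c d : ℤ) (h : w = (c : ℝ) • u + (d : ℝ) • v) :
    ∀ γ ∈ Δ, coeff w γ = c * coeff u γ + d * coeff v γ := by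
  intro γ hγ
  have hsum : w = ∑ γ ∈ Δ, ((c * coeff u γ + d * coeff v γ : ℤ) : ℝ) • γ := by
    conv_lhs => rw [h, hB.2.2.1 u hu, hB.2.2.1 v hv]
    rw [Finset.smul_sum, Finset.smul_sum, ← Finset.sum_add_distrib]
    refine Finset.sum_congr rfl fun γ _ => ?_
    push_cast
    module
  exact_mod_cast hB.coeff_eq_of_eq_sum hw _ hsum γ hγ

lemma coeff_of_mem {γ₀ : E} (hγ₀ : γ₀ ∈ Δ) : ∀ γ ∈ Δ, coeff γ₀ γ = if γ = γ₀ then 1 else 0 := by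
  intro γ hγ
  have hsum : γ₀ = ∑ γ ∈ Δ, ((if γ = γ₀ then 1 else 0 : ℤ) : ℝ) • γ := by
    simp [Finset.sum_ite_eq', hγ₀]
  exact_mod_cast hB.coeff_eq_of_eq_sum (hB.1 hγ₀) _ hsum γ hγ

lemma isPos_of_mem {γ₀ : E} (hγ₀ : γ₀ ∈ Δ) : IsPos Δ coeff γ₀ := by
  intro γ hγ
  rw [hB.coeff_of_mem hγ₀ γ hγ]
  split_ifs <;> omega

lemma exists_coeff_ne_zero {r : E} (hr : r ∈ R.roots) : ∃ γ ∈ Δ, coeff r γ ≠ 0 := by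
  by_contra! h
  apply R.ne_zero r hr
  rw [hB.2.2.1 r hr]
  exact Finset.sum_eq_zero fun γ hγ => by simp [h γ hγ]

lemma not_isPos_neg {r : E} (hr : r ∈ R.roots) (hpos : IsPos Δ coeff r) :
    ¬ IsPos Δ coeff (-r) := by
  intro hneg
  obtain ⟨γ, hγ, hne⟩ := hB.exists_coeff_ne_zero hr
  have := hB.coeff_smul_add_smul hr hr (R.neg_mem hr) (-1) 0 (by simp) γ hγ
  have := hpos γ hγ
  have := hneg γ hγ
  omega

lemma isPos_reflMap {γ r : E} (hγ : γ ∈ Δ) (hr : r ∈ R.roots) (hpos : IsPos Δ coeff r)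
    (hne : r ≠ γ) : IsPos Δ coeff (reflMap γ r) ∧ reflMap γ r ≠ γ := by
  have hγR := hB.1 hγ
  have hγ0 := R.ne_zero γ hγR
  have hmem := R.reflMap_mem hγR hr
  have hnegγ : r ≠ -γ := fun h =>
    hB.not_isPos_neg hγR (hB.isPos_of_mem hγ) (by rw [← h]; exact hpos)
  refine ⟨?_, fun h => hnegγ ?_⟩
  · obtain ⟨n, hn⟩ := R.pairing_int γ hγR r hr
    have hcoeff := hB.coeff_smul_add_smul hr hγR hmem 1 (-n)
      (by rw [reflMap, show pairR r γ = n from hn]; push_cast; module)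
    refine (hB.2.2.2 _ hmem).resolve_right fun hle => ?_
    have hsupp : ∀ γ' ∈ Δ, γ' ≠ γ → coeff r γ' = 0 := by
      intro γ' hγ' hne'
      have := hcoeff γ' hγ'
      rw [hB.coeff_of_mem hγ γ' hγ', if_neg hne'] at this
      have := hle γ' hγ'
      have := hpos γ' hγ'
      omega
    have hrγ : r = (coeff r γ : ℝ) • γ := by
      conv_lhs => rw [hB.2.2.1 r hr]
      exact Finset.sum_eq_single_of_mem γ hγ fun γ' hγ' hne' => by simp [hsupp γ' hγ' hne']
    rcases R.reduced γ hγR _ (hrγ ▸ hr) with h1 | h1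
    · exact hne (by rw [hrγ, h1, one_smul])
    · exact hnegγ (by rw [hrγ, h1, neg_one_smul])
  · rw [← reflMap_reflMap hγ0 r, h, reflMap_self hγ0]

lemma sum_inner_posRootsOfLen_of_mem {γ : E} (hγ : γ ∈ Δ) (L : ℝ) :
    ∑ r ∈ posRootsOfLen R Δ coeff L, ⟪γ, r⟫ = if ⟪γ, γ⟫ = L then L else 0 := by
  set P := posRootsOfLen R Δ coeff L
  have hγR := hB.1 hγ
  have hγ0 := R.ne_zero γ hγR
  have hmaps : ∀ r ∈ P.erase γ, reflMap γ r ∈ P.erase γ := by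
    intro r hr
    obtain ⟨hrγ, hrR, hrpos, hrL⟩ := by rwa [Finset.mem_erase, mem_posRootsOfLen] at hr
    obtain ⟨hpos', hne'⟩ := hB.isPos_reflMap hγ hrR hrpos hrγ
    exact Finset.mem_erase.mpr ⟨hne', mem_posRootsOfLen.mpr
      ⟨R.reflMap_mem hγR hrR, hpos', by rw [inner_reflMap_reflMap hγ0, hrL]⟩⟩
  have hzero : ∑ r ∈ P.erase γ, ⟪γ, r⟫ = 0 := by
    have : ∑ r ∈ P.erase γ, ⟪γ, r⟫ = ∑ r ∈ P.erase γ, -⟪γ, r⟫ :=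
      Finset.sum_nbij' (reflMap γ) (reflMap γ) hmaps hmaps (fun r _ => reflMap_reflMap hγ0 r)
        (fun r _ => reflMap_reflMap hγ0 r) (fun r _ => by rw [inner_reflMap_right hγ0, neg_neg])
    rw [Finset.sum_neg_distrib] at this
    linarith
  split_ifs with hL
  · have hγP : γ ∈ P := mem_posRootsOfLen.mpr ⟨hγR, hB.isPos_of_mem hγ, hL⟩
    rw [← Finset.add_sum_erase P _ hγP, hzero, hL, add_zero]
  · rwa [Finset.erase_eq_of_notMem fun h => hL (mem_posRootsOfLen.mp h).2.2] at hzero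

lemma sum_inner_posRootsOfLen {x : E} (hx : x ∈ R.roots) (L : ℝ) :
    ∑ r ∈ posRootsOfLen R Δ coeff L, ⟪x, r⟫ = L * htP Δ coeff (fun γ => ⟪γ, γ⟫ = L) x := by
  calc ∑ r ∈ posRootsOfLen R Δ coeff L, ⟪x, r⟫
      = ∑ γ ∈ Δ, (coeff x γ : ℝ) * ∑ r ∈ posRootsOfLen R Δ coeff L, ⟪γ, r⟫ := by
        conv_lhs => rw [hB.2.2.1 x hx]
        simp only [sum_inner, real_inner_smul_left, Finset.mul_sum]
        exact Finset.sum_comm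
    _ = ∑ γ ∈ Δ, if ⟪γ, γ⟫ = L then L * coeff x γ else 0 := by
        refine Finset.sum_congr rfl fun γ hγ => ?_
        rw [hB.sum_inner_posRootsOfLen_of_mem hγ]
        split_ifs <;> ring
    _ = L * htP Δ coeff (fun γ => ⟪γ, γ⟫ = L) x := by
        rw [← Finset.sum_filter, htP, Int.cast_sum, Finset.mul_sum]

lemma exists_two_inner_eq_of_isPos {β r : E} (hβ : β ∈ R.roots) (hr : r ∈ R.roots)
    (hβpos : IsPos Δ coeff β) (hrpos : IsPos Δ coeff r) (hlen : ⟪β, β⟫ = ⟪r, r⟫) (hne : β ≠ r) :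
    ∃ c : ℤ, |c| ≤ 1 ∧ 2 * ⟪β, r⟫ = c * ⟪r, r⟫ := by
  obtain ⟨c, hc⟩ := R.exists_two_inner_eq hβ hr
  exact ⟨c, abs_le_one_of_two_inner_eq hlen hne
    (fun h => hB.not_isPos_neg hr hrpos (h ▸ hβpos)) hc, hc⟩

/-- Here `c = ⟨Λα - θ, r∨⟩` and `m = ⟨α, r∨⟩`; `|c| ≤ 1` because `Λα - θ` and `r` are distinct
positive roots of the same length. -/
lemma exists_two_inner_smul_sub_eq {Λ : ℤ} {α θ r : E} (hα : α ∈ R.roots)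
    (hβ : (Λ : ℝ) • α - θ ∈ posRootsOfLen R Δ coeff ⟪θ, θ⟫)
    (hr : r ∈ posRootsOfLen R Δ coeff ⟪θ, θ⟫) (hrβ : r ≠ (Λ : ℝ) • α - θ) :
    ∃ c m : ℤ, |c| ≤ 1 ∧ 2 * ⟪(Λ : ℝ) • α - θ, r⟫ = c * ⟪θ, θ⟫ ∧
      2 * ⟪r, θ⟫ = ((Λ * m - c : ℤ) : ℝ) * ⟪θ, θ⟫ := by
  obtain ⟨hβR, hβpos, hβL⟩ := mem_posRootsOfLen.mp hβ
  obtain ⟨hrR, hrpos, hrL⟩ := mem_posRootsOfLen.mp hr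
  obtain ⟨c, hc, hβr⟩ :=
    hB.exists_two_inner_eq_of_isPos hβR hrR hβpos hrpos (hβL.trans hrL.symm) (Ne.symm hrβ)
  obtain ⟨m, hαr⟩ := R.exists_two_inner_eq hα hrR
  rw [hrL] at hβr hαr
  have hlin : ⟪(Λ : ℝ) • α - θ, r⟫ = Λ * ⟪α, r⟫ - ⟪θ, r⟫ := by
    rw [inner_sub_left, real_inner_smul_left]
  refine ⟨c, m, hc, hβr, ?_⟩
  rw [real_inner_comm θ r]
  push_cast
  linear_combination 2 * hlin + (Λ : ℝ) * hαr - hβr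

variable {θ : E} (hθ : θ ∈ R.roots) (hθhigh : ∀ α ∈ R.roots, ∀ γ ∈ Δ, coeff α γ ≤ coeff θ γ)
include hθhigh

lemma isPos_of_highest : IsPos Δ coeff θ := fun γ hγ => by
  have := hθhigh γ (hB.1 hγ) γ hγ
  rw [hB.coeff_of_mem hγ γ hγ, if_pos rfl] at this
  omega

include hθ

lemma highest_mem_posRootsOfLen : θ ∈ posRootsOfLen R Δ coeff ⟪θ, θ⟫ :=
  mem_posRootsOfLen.mpr ⟨hθ, hB.isPos_of_highest hθhigh, rfl⟩

lemma inner_highest_eq_zero_or {r : E} (hr : r ∈ posRootsOfLen R Δ coeff ⟪θ, θ⟫) (hrθ : r ≠ θ) :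
    ⟪r, θ⟫ = 0 ∨ 2 * ⟪r, θ⟫ = ⟪θ, θ⟫ := by
  obtain ⟨hrR, hrpos, hrL⟩ := mem_posRootsOfLen.mp hr
  obtain ⟨n, hn1, hn⟩ :=
    hB.exists_two_inner_eq_of_isPos hrR hθ hrpos (hB.isPos_of_highest hθhigh) hrL hrθ
  rw [abs_le] at hn1
  obtain rfl | rfl | rfl : n = -1 ∨ n = 0 ∨ n = 1 := by omega
  · have hmem : r + θ ∈ R.roots := by
      have := R.reflMap_mem hθ hrR
      rwa [reflMap, pairR_eq_of_two_inner_eq (R.ne_zero θ hθ) hn, Int.cast_neg, Int.cast_one,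
        neg_one_smul, sub_neg_eq_add] at this
    obtain ⟨γ, hγ, hne⟩ := hB.exists_coeff_ne_zero hrR
    have := hB.coeff_smul_add_smul hrR hθ hmem 1 1 (by simp) γ hγ
    have := hθhigh _ hmem γ hγ
    have := hrpos γ hγ
    omega
  · exact Or.inl (by simpa using hn)
  · exact Or.inr (by simpa using hn)

lemma sub_mem_posRootsOfLen {r : E} (hr : r ∈ posRootsOfLen R Δ coeff ⟪θ, θ⟫)
    (hrθ : 2 * ⟪r, θ⟫ = ⟪θ, θ⟫) : θ - r ∈ posRootsOfLen R Δ coeff ⟪θ, θ⟫ := by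
  obtain ⟨hrR, hrpos, hrL⟩ := mem_posRootsOfLen.mp hr
  have hmem : θ - r ∈ R.roots := by
    have := R.neg_mem (R.reflMap_mem hθ hrR)
    rwa [reflMap, pairR_eq_of_two_inner_eq (n := 1) (R.ne_zero θ hθ) (by rw [hrθ, Int.cast_one,
      one_mul]), Int.cast_one, one_smul, neg_sub] at this
  refine mem_posRootsOfLen.mpr ⟨hmem, fun γ hγ => ?_, ?_⟩
  · have := hB.coeff_smul_add_smul hθ hrR hmem 1 (-1) (by simp [sub_eq_add_neg]) γ hγ
    have := hθhigh r hrR γ hγ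
    omega
  · simp only [inner_sub_left, inner_sub_right, real_inner_comm r θ, hrL]
    linarith

lemma two_mul_sum_inner_filter (x : E) :
    2 * ∑ r ∈ (posRootsOfLen R Δ coeff ⟪θ, θ⟫).filter (fun r => 2 * ⟪r, θ⟫ = ⟪θ, θ⟫), ⟪x, r⟫
      = ((posRootsOfLen R Δ coeff ⟪θ, θ⟫).filter (fun r => 2 * ⟪r, θ⟫ = ⟪θ, θ⟫)).card * ⟪x, θ⟫ := by
  set T := (posRootsOfLen R Δ coeff ⟪θ, θ⟫).filter (fun r => 2 * ⟪r, θ⟫ = ⟪θ, θ⟫)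
  have hmaps : ∀ r ∈ T, θ - r ∈ T := by
    intro r hr
    obtain ⟨hrP, hrθ⟩ := Finset.mem_filter.mp hr
    refine Finset.mem_filter.mpr ⟨hB.sub_mem_posRootsOfLen hθ hθhigh hrP hrθ, ?_⟩
    rw [inner_sub_left]
    linarith
  have hflip : ∑ r ∈ T, ⟪x, r⟫ = ∑ r ∈ T, ⟪x, θ - r⟫ :=
    Finset.sum_nbij' (θ - ·) (θ - ·) hmaps hmaps (fun r _ => sub_sub_cancel θ r)
      (fun r _ => sub_sub_cancel θ r) (fun r _ => by rw [sub_sub_cancel])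
  rw [two_mul]
  nth_rewrite 2 [hflip]
  rw [← Finset.sum_add_distrib]
  simp only [inner_sub_right, add_sub_cancel, Finset.sum_const, nsmul_eq_mul]

lemma sum_posRootsOfLen_highest (f : E → ℝ) :
    ∑ r ∈ posRootsOfLen R Δ coeff ⟪θ, θ⟫, f r = f θ
      + ∑ r ∈ (posRootsOfLen R Δ coeff ⟪θ, θ⟫).filter (fun r => ⟪r, θ⟫ = 0), f r
      + ∑ r ∈ (posRootsOfLen R Δ coeff ⟪θ, θ⟫).filter (fun r => 2 * ⟪r, θ⟫ = ⟪θ, θ⟫), f r := by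
  set P := posRootsOfLen R Δ coeff ⟪θ, θ⟫
  have hθ0 : ⟪θ, θ⟫ ≠ 0 := (inner_self_ne_zero (𝕜 := ℝ)).mpr (R.ne_zero θ hθ)
  have hsplit : P.filter (fun r => ¬⟪r, θ⟫ = 0)
      = insert θ (P.filter fun r => 2 * ⟪r, θ⟫ = ⟪θ, θ⟫) := by
    ext r
    simp only [Finset.mem_filter, Finset.mem_insert]
    constructor
    · rintro ⟨hrP, hr0⟩
      by_cases hrθ : r = θ
      · exact Or.inl hrθ
      · exact Or.inr ⟨hrP, (hB.inner_highest_eq_zero_or hθ hθhigh hrP hrθ).resolve_left hr0⟩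
    · rintro (rfl | ⟨hrP, hr⟩)
      · exact ⟨hB.highest_mem_posRootsOfLen hθ hθhigh, hθ0⟩
      · exact ⟨hrP, fun h0 => hθ0 (by linarith)⟩
  have hθT : θ ∉ P.filter fun r => 2 * ⟪r, θ⟫ = ⟪θ, θ⟫ :=
    fun h => hθ0 (by linarith [(Finset.mem_filter.mp h).2])
  rw [← Finset.sum_filter_add_sum_filter_not P (fun r => ⟪r, θ⟫ = 0), hsplit,
    Finset.sum_insert hθT]
  ring

lemma sum_inner_posRootsOfLen_of_inner_eq_zero {β : E}
    (hβ : β ∈ posRootsOfLen R Δ coeff ⟪θ, θ⟫) (hβθ : ⟪β, θ⟫ = 0)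
    (horth : ∀ r ∈ posRootsOfLen R Δ coeff ⟪θ, θ⟫, r ≠ β → ⟪r, θ⟫ = 0 → ⟪β, r⟫ = 0) :
    ∑ r ∈ posRootsOfLen R Δ coeff ⟪θ, θ⟫, ⟪β, r⟫ = ⟪β, β⟫ := by
  have hT := hB.two_mul_sum_inner_filter hθ hθhigh β
  rw [hβθ, mul_zero] at hT
  rw [hB.sum_posRootsOfLen_highest hθ hθhigh, hβθ, Finset.sum_eq_single_of_mem β
    (Finset.mem_filter.mpr ⟨hβ, hβθ⟩)
    fun r hr hrβ => horth r (Finset.mem_filter.mp hr).1 hrβ (Finset.mem_filter.mp hr).2]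
  linarith

/-- Computing `∑ ⟪β, r⟫` over the `r` with `⟨r, θ∨⟩ = 1` in two ways shows that there are
exactly two such roots, `β` and `θ - β`. -/
lemma sum_inner_posRootsOfLen_of_two_inner_eq {β : E}
    (hβ : β ∈ posRootsOfLen R Δ coeff ⟪θ, θ⟫) (hβθ : 2 * ⟪β, θ⟫ = ⟪θ, θ⟫)
    (horth : ∀ r ∈ posRootsOfLen R Δ coeff ⟪θ, θ⟫, r ≠ β → ⟪r, θ⟫ = 0 → ⟪β, r⟫ = 0)
    (hobtuse : ∀ r ∈ posRootsOfLen R Δ coeff ⟪θ, θ⟫, r ≠ β → 2 * ⟪r, θ⟫ = ⟪θ, θ⟫ →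
      2 * ⟪β, r⟫ = -⟪θ, θ⟫) :
    ∑ r ∈ posRootsOfLen R Δ coeff ⟪θ, θ⟫, ⟪β, r⟫ = ⟪β, β⟫ := by
  set P := posRootsOfLen R Δ coeff ⟪θ, θ⟫
  set T := P.filter fun r => 2 * ⟪r, θ⟫ = ⟪θ, θ⟫
  have hθ0 : ⟪θ, θ⟫ ≠ 0 := (inner_self_ne_zero (𝕜 := ℝ)).mpr (R.ne_zero θ hθ)
  have hβL : ⟪β, β⟫ = ⟪θ, θ⟫ := (mem_posRootsOfLen.mp hβ).2.2
  have hβT : β ∈ T := Finset.mem_filter.mpr ⟨hβ, hβθ⟩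
  have hP₀ : ∑ r ∈ P.filter (fun r => ⟪r, θ⟫ = 0), ⟪β, r⟫ = 0 := by
    refine Finset.sum_eq_zero fun r hr => ?_
    obtain ⟨hrP, hrθ⟩ := Finset.mem_filter.mp hr
    refine horth r hrP (fun h => hθ0 ?_) hrθ
    rw [← hβθ, ← h, hrθ, mul_zero]
  have hTsum : ∑ r ∈ T, ⟪β, r⟫ = ⟪θ, θ⟫ - (T.erase β).card * ⟪θ, θ⟫ / 2 := by
    rw [← Finset.add_sum_erase T _ hβT, hβL, Finset.sum_congr rfl fun r hr =>
      show ⟪β, r⟫ = -⟪θ, θ⟫ / 2 by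
        obtain ⟨hrβ, hrT⟩ := Finset.mem_erase.mp hr
        linarith [hobtuse r (Finset.mem_filter.mp hrT).1 hrβ (Finset.mem_filter.mp hrT).2],
      Finset.sum_const, nsmul_eq_mul]
    ring
  have hcount := hB.two_mul_sum_inner_filter hθ hθhigh β
  rw [← Finset.card_erase_add_one hβT, Nat.cast_add, Nat.cast_one] at hcount
  have hk : (((T.erase β).card : ℝ) - 1) * ⟪θ, θ⟫ = 0 := by
    linear_combination (4 / 3 : ℝ) * hTsum - (2 / 3 : ℝ) * hcount
      - ((((T.erase β).card : ℝ) + 1) / 3) * hβθ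
  have hk1 : ((T.erase β).card : ℝ) = 1 := by
    linarith [(mul_eq_zero.mp hk).resolve_right hθ0]
  rw [hB.sum_posRootsOfLen_highest hθ hθhigh, hP₀, hTsum, hk1, hβL]
  linarith

lemma sum_inner_posRootsOfLen_smul_sub {Λ : ℤ} (hΛ : Λ = 2 ∨ Λ = 3) {α : E} (hα : α ∈ R.roots)
    (hβ : (Λ : ℝ) • α - θ ∈ posRootsOfLen R Δ coeff ⟪θ, θ⟫)
    (hβθ : 2 * ⟪(Λ : ℝ) • α - θ, θ⟫ = (Λ - 2) * ⟪θ, θ⟫) :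
    ∑ r ∈ posRootsOfLen R Δ coeff ⟪θ, θ⟫, ⟪(Λ : ℝ) • α - θ, r⟫ = ⟪θ, θ⟫ := by
  set β := (Λ : ℝ) • α - θ
  set P := posRootsOfLen R Δ coeff ⟪θ, θ⟫
  have hβL := (mem_posRootsOfLen.mp hβ).2.2
  have hθ0 : ⟪θ, θ⟫ ≠ 0 := (inner_self_ne_zero (𝕜 := ℝ)).mpr (R.ne_zero θ hθ)
  have horth : ∀ r ∈ P, r ≠ β → ⟪r, θ⟫ = 0 → ⟪β, r⟫ = 0 := by
    intro r hr hrβ hrθ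
    obtain ⟨c, m, hc, hβr, hθr⟩ := hB.exists_two_inner_smul_sub_eq hα hβ hr hrβ
    rw [hrθ, mul_zero, eq_comm, mul_eq_zero] at hθr
    have hcm : Λ * m - c = 0 := by exact_mod_cast hθr.resolve_right hθ0
    have hc0 : c = 0 := by
      rw [abs_le] at hc
      rcases hΛ with rfl | rfl <;> omega
    rw [hc0, Int.cast_zero, zero_mul] at hβr
    linarith
  rcases hΛ with rfl | rfl
  · push_cast at hβθ
    exact (hB.sum_inner_posRootsOfLen_of_inner_eq_zero hθ hθhigh hβ (by linarith) horth).trans hβL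
  · push_cast at hβθ
    refine (hB.sum_inner_posRootsOfLen_of_two_inner_eq hθ hθhigh hβ (by linarith) horth
      fun r hr hrβ hrθ => ?_).trans hβL
    obtain ⟨c, m, hc, hβr, hθr⟩ := hB.exists_two_inner_smul_sub_eq hα hβ hr hrβ
    have hcm : 3 * m - c = 1 := by
      have : ((3 * m - c : ℤ) : ℝ) * ⟪θ, θ⟫ = ((1 : ℤ) : ℝ) * ⟪θ, θ⟫ := by
        rw [← hθr, hrθ, Int.cast_one, one_mul]
      exact_mod_cast mul_right_cancel₀ hθ0 this
    have hc1 : c = -1 := by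
      rw [abs_le] at hc
      omega
    rw [hβr, hc1, Int.cast_neg, Int.cast_one, neg_one_mul]

end IsBase

/-- if `α` is a short root with `(α,θ∨) ≠ 0` such that `Λα − θ` is a positive
root, then `ht_l(α) = (ht_l(θ) + 1)/Λ`, stated as `Λ · ht_l(α) = ht_l(θ) + 1`. -/
theorem stmt4 (R : RRS E) (Δ : Finset E) (coeff : E → E → ℤ) (hB : IsBase R Δ coeff)
    (Λ : ℤ) (a : ℝ) (hΛ : Λ = 2 ∨ Λ = 3) (ha : 0 < a)
    (hlen : ∀ α ∈ R.roots, ⟪α, α⟫ = a ∨ ⟪α, α⟫ = (Λ : ℝ) * a)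
    (θ : E) (hθmem : θ ∈ R.roots)
    (hθhigh : ∀ α ∈ R.roots, ∀ γ ∈ Δ, coeff α γ ≤ coeff θ γ)
    (hθlong : ⟪θ, θ⟫ = (Λ : ℝ) * a)
    (α : E) (hα : α ∈ R.roots) (hαs : ⟪α, α⟫ = a) (hne : ⟪α, θ⟫ ≠ 0)
    (hroot : ((Λ : ℝ) • α - θ) ∈ R.roots) (hpos : IsPos Δ coeff ((Λ : ℝ) • α - θ)) :
    Λ * htP Δ coeff (fun γ => ⟪γ, γ⟫ = (Λ : ℝ) * a) α
      = htP Δ coeff (fun γ => ⟪γ, γ⟫ = (Λ : ℝ) * a) θ + 1 := by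
  have hαθ := R.two_inner_eq_of_smul_sub_mem hΛ ha hlen hθmem hθlong hα hαs hne hroot
  have hβL : ⟪(Λ : ℝ) • α - θ, (Λ : ℝ) • α - θ⟫ = ⟪θ, θ⟫ := by
    simp only [inner_sub_left, inner_sub_right, real_inner_smul_left, real_inner_smul_right, hαs,
      real_inner_comm α θ]
    linear_combination (-(Λ : ℝ)) * hαθ
  have hβθ : 2 * ⟪(Λ : ℝ) • α - θ, θ⟫ = (Λ - 2) * ⟪θ, θ⟫ := by
    rw [inner_sub_left, real_inner_smul_left, hθlong]
    linear_combination (Λ : ℝ) * hαθ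
  have hsum := hB.sum_inner_posRootsOfLen_smul_sub hθmem hθhigh hΛ hα
    (mem_posRootsOfLen.mpr ⟨hroot, hpos, hβL⟩) hβθ
  rw [hB.sum_inner_posRootsOfLen hroot, hθlong] at hsum
  have hht : htP Δ coeff (fun γ => ⟪γ, γ⟫ = (Λ : ℝ) * a) ((Λ : ℝ) • α - θ) = 1 := by
    have hΛa : (Λ : ℝ) * a ≠ 0 := by rcases hΛ with rfl | rfl <;> positivity
    exact_mod_cast mul_left_cancel₀ hΛa (hsum.trans (mul_one _).symm)
  have hcoeff := hB.coeff_smul_add_smul hα hθmem hroot Λ (-1) (by simp [sub_eq_add_neg])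
  rw [htP, Finset.sum_congr rfl fun γ hγ => hcoeff γ (Finset.mem_filter.mp hγ).1,
    Finset.sum_add_distrib, ← Finset.mul_sum, ← Finset.mul_sum] at hht
  rw [htP, htP]
  linarith

end
end

section
/- Let R be a reduced irreducible root system with Λ = 2 or simply laced, highest root θ, and fix a symmetric reduced decomposition s_θ = s_{j_p}···s_{j_1}s_{j_0}s_{j_{-1}}···s_{j_{-p}} with j_{-i} = j_i. With α^(i) the associated chain of positive roots made negative by s_θ (indexed by i from −p to p), one has α^(−i) = θ − α^(i) for all i ≠ 0, and α^(0) = θ. -/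
open scoped RealInnerProductSpace Classical

noncomputable section

variable {E : Type*} [NormedAddCommGroup E] [InnerProductSpace ℝ E]

lemma inner_self_ne (α : E) (hα : α ≠ 0) : ⟪α, α⟫ ≠ 0 := inner_self_ne_zero.mpr hα

lemma pairR_add (α x y : E) : pairR (x + y) α = pairR x α + pairR y α := by
  simp [pairR, inner_add_left]; ring

lemma pairR_smul (α : E) (c : ℝ) (x : E) : pairR (c • x) α = c * pairR x α := by
  simp [pairR, real_inner_smul_left]; ring

lemma reflMap_add (α x y : E) : reflMap α (x + y) = reflMap α x + reflMap α y := by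
  simp [reflMap, pairR_add, add_smul]; abel

lemma reflMap_smul (α : E) (c : ℝ) (x : E) : reflMap α (c • x) = c • reflMap α x := by
  simp [reflMap, pairR_smul, smul_sub, mul_smul]

lemma reflMap_neg (α x : E) : reflMap α (-x) = - reflMap α x := by
  have := reflMap_smul α (-1) x; simpa using this

lemma reflMap_self_adjoint (α x y : E) : ⟪reflMap α x, y⟫ = ⟪x, reflMap α y⟫ := by
  simp only [reflMap, pairR, inner_sub_left, inner_sub_right, real_inner_smul_left,
    real_inner_smul_right]
  rw [real_inner_comm y α]
  ring

lemma pairR_self (α : E) (hα : α ≠ 0) : pairR α α = 2 := by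
  unfold pairR; rw [mul_div_assoc, div_self (inner_self_ne α hα), mul_one]

lemma reflMap_root_self (α : E) (hα : α ≠ 0) : reflMap α α = -α := by
  simp [reflMap, pairR_self α hα, two_smul]

lemma reflMap_invol (α : E) (hα : α ≠ 0) (x : E) : reflMap α (reflMap α x) = x := by
  have hαα := inner_self_ne α hα
  simp only [reflMap, pairR, inner_sub_left, real_inner_smul_left, sub_smul, smul_smul]
  have : (2 * (⟪x, α⟫ - 2 * ⟪x, α⟫ / ⟪α, α⟫ * ⟪α, α⟫) / ⟪α, α⟫) = - (2 * ⟪x, α⟫ / ⟪α, α⟫) := by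
    field_simp; ring
  rw [this]; module

lemma inner_reflMap (α : E) (hα : α ≠ 0) (x y : E) :
    ⟪reflMap α x, reflMap α y⟫ = ⟪x, y⟫ := by
  rw [reflMap_self_adjoint, reflMap_invol α hα]

lemma pairR_reflMap (δ : E) (hδ : δ ≠ 0) (x γ : E) :
    pairR (reflMap δ x) γ = pairR x (reflMap δ γ) := by
  unfold pairR
  rw [reflMap_self_adjoint δ x γ, inner_reflMap δ hδ γ γ]

lemma reflMap_conj_single (δ : E) (hδ : δ ≠ 0) (γ x : E) :
    reflMap (reflMap δ γ) x = reflMap δ (reflMap γ (reflMap δ x)) := by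
  conv_rhs => rw [show reflMap γ (reflMap δ x) = reflMap δ x - pairR (reflMap δ x) γ • γ from rfl]
  rw [sub_eq_add_neg, reflMap_add, ← smul_neg, reflMap_smul, reflMap_neg, reflMap_invol δ hδ,
    pairR_reflMap δ hδ]
  simp only [reflMap]
  module

@[simp] lemma wordMap_nil (x : E) : wordMap ([] : List E) x = x := rfl

lemma wordMap_cons (a : E) (m : List E) (x : E) :
    wordMap (a :: m) x = wordMap m (reflMap a x) := rfl

lemma wordMap_append (m m' : List E) (x : E) :
    wordMap (m ++ m') x = wordMap m' (wordMap m x) := List.foldl_append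

lemma wordMap_singleton (a x : E) : wordMap [a] x = reflMap a x := rfl

lemma wordMap_neg (m : List E) (x : E) : wordMap m (-x) = - wordMap m x := by
  induction m generalizing x with
  | nil => simp
  | cons a m ih => rw [wordMap_cons, wordMap_cons, reflMap_neg, ih]

lemma wordMap_rev_word (m : List E) (hm : ∀ γ ∈ m, γ ≠ 0) (x : E) :
    wordMap m.reverse (wordMap m x) = x := by
  induction m generalizing x with
  | nil => simp
  | cons a m ih =>
    rw [wordMap_cons, List.reverse_cons, wordMap_append, ih (fun γ h => hm γ (by simp [h])),
      wordMap_singleton, reflMap_invol a (hm a (by simp))]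

lemma wordMap_word_rev (m : List E) (hm : ∀ γ ∈ m, γ ≠ 0) (x : E) :
    wordMap m (wordMap m.reverse x) = x := by
  have := wordMap_rev_word m.reverse (fun γ h => hm γ (List.mem_reverse.mp h)) x
  rwa [List.reverse_reverse] at this

lemma reflMap_conj (m : List E) (hm : ∀ γ ∈ m, γ ≠ 0) (γ x : E) :
    reflMap (wordMap m γ) x = wordMap m (reflMap γ (wordMap m.reverse x)) := by
  induction m generalizing γ x with
  | nil => simp
  | cons a m ih =>
    have ha : a ≠ 0 := hm a (by simp)
    have hm' : ∀ δ ∈ m, δ ≠ 0 := fun δ h => hm δ (by simp [h])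
    rw [wordMap_cons, ih hm', reflMap_conj_single a ha, List.reverse_cons, wordMap_append,
      wordMap_singleton, ← wordMap_cons]

lemma deletion_mid (B : List E) (hB : ∀ γ ∈ B, γ ≠ 0) (γ δ : E) (hγ : γ ≠ 0) (hδ : δ ≠ 0)
    (key : wordMap B.reverse δ = γ) (x : E) :
    wordMap (γ :: (B ++ [δ])) x = wordMap B x := by
  have hBr : ∀ γ ∈ B.reverse, γ ≠ 0 := fun γ h => hB γ (List.mem_reverse.mp h)
  have h1 : reflMap γ x = wordMap B.reverse (reflMap δ (wordMap B x)) := by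
    rw [← key, reflMap_conj B.reverse hBr, List.reverse_reverse]
  rw [wordMap_cons, wordMap_append, wordMap_singleton, h1,
    wordMap_word_rev B hB, reflMap_invol δ hδ]

lemma deletion (A B C : List E) (hB : ∀ γ ∈ B, γ ≠ 0) (γ δ : E) (hγ : γ ≠ 0) (hδ : δ ≠ 0)
    (key : wordMap B.reverse δ = γ) (x : E) :
    wordMap (A ++ [γ] ++ B ++ [δ] ++ C) x = wordMap (A ++ B ++ C) x := by
  have : A ++ [γ] ++ B ++ [δ] ++ C = A ++ ((γ :: (B ++ [δ])) ++ C) := by simp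
  rw [this, wordMap_append, wordMap_append, deletion_mid B hB γ δ hγ hδ key,
    List.append_assoc, wordMap_append, wordMap_append]

section BaseLemmas

variable {R : RRS E} {Δ : Finset E} {coeff : E → E → ℤ}

lemma sum_zero_coeff (hB : IsBase R Δ coeff) (f : E → ℝ) (h : ∑ γ ∈ Δ, f γ • γ = 0) :
    ∀ γ ∈ Δ, f γ = 0 := by
  intro γ hγ
  have hli := linearIndependent_iff'.mp hB.2.1 Finset.univ (fun i => f i)
  have hsum : ∑ i : (Δ : Set E), f i • (i : E) = ∑ γ ∈ Δ, f γ • γ :=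
    Finset.sum_finset_coe (fun x => f x • x) Δ
  have := hli (by rw [← hsum] at h; simpa using h) ⟨γ, hγ⟩ (Finset.mem_univ _)
  exact this

lemma sum_eq_coeff (hB : IsBase R Δ coeff) (f g : E → ℝ)
    (h : ∑ γ ∈ Δ, f γ • γ = ∑ γ ∈ Δ, g γ • γ) : ∀ γ ∈ Δ, f γ = g γ := by
  intro γ hγ
  have : ∑ γ ∈ Δ, (f γ - g γ) • γ = 0 := by
    simp only [sub_smul, Finset.sum_sub_distrib, h, sub_self]
  have h2 := sum_zero_coeff hB (fun γ => f γ - g γ) this γ hγ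
  change f γ - g γ = 0 at h2
  linarith

lemma coeff_unique (hB : IsBase R Δ coeff) {α : E} (hα : α ∈ R.roots) (c : E → ℝ)
    (h : α = ∑ γ ∈ Δ, c γ • γ) : ∀ γ ∈ Δ, c γ = (coeff α γ : ℝ) := by
  apply sum_eq_coeff hB
  exact h.symm.trans (hB.2.2.1 α hα)

lemma coeff_simple_self (hB : IsBase R Δ coeff) {γ : E} (hγ : γ ∈ Δ) : coeff γ γ = 1 := by
  have h : γ = ∑ δ ∈ Δ, (if δ = γ then (1:ℝ) else 0) • δ := by
    simp [ite_smul, Finset.sum_ite_eq' Δ γ, hγ]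
  have := coeff_unique hB (hB.1 hγ) _ h γ hγ
  simp at this
  exact_mod_cast this.symm

lemma coeff_simple_other (hB : IsBase R Δ coeff) {γ δ : E} (hγ : γ ∈ Δ) (hδ : δ ∈ Δ)
    (hne : δ ≠ γ) : coeff γ δ = 0 := by
  have h : γ = ∑ δ ∈ Δ, (if δ = γ then (1:ℝ) else 0) • δ := by
    simp [ite_smul, Finset.sum_ite_eq' Δ γ, hγ]
  have := coeff_unique hB (hB.1 hγ) _ h δ hδ
  simp [hne] at this
  exact_mod_cast this.symm

lemma isPos_simple (hB : IsBase R Δ coeff) {γ : E} (hγ : γ ∈ Δ) : IsPos Δ coeff γ := by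
  intro δ hδ
  rcases eq_or_ne δ γ with rfl | hne
  · rw [coeff_simple_self hB hγ]; norm_num
  · rw [coeff_simple_other hB hγ hδ hne]

lemma neg_mem_roots (R : RRS E) {α : E} (hα : α ∈ R.roots) : -α ∈ R.roots := by
  have := R.reflect_mem α hα α hα
  have h2 : (2 * ⟪α, α⟫ / ⟪α, α⟫ : ℝ) = 2 := by
    rw [mul_div_assoc, div_self (inner_self_ne α (R.ne_zero α hα)), mul_one]
  rw [h2] at this
  convert this using 1
  module

lemma coeff_neg (hB : IsBase R Δ coeff) {α : E} (hα : α ∈ R.roots) {γ : E} (hγ : γ ∈ Δ) :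
    coeff (-α) γ = - coeff α γ := by
  have h : -α = ∑ γ ∈ Δ, (-(coeff α γ : ℝ)) • γ := by
    have h2 : ∑ γ ∈ Δ, (-(coeff α γ : ℝ)) • γ = -∑ γ ∈ Δ, ((coeff α γ : ℝ)) • γ := by
      simp [neg_smul, Finset.sum_neg_distrib]
    rw [h2, ← hB.2.2.1 α hα]
  have := coeff_unique hB (neg_mem_roots R hα) _ h γ hγ
  exact_mod_cast this.symm

lemma root_eq_of_coeff_eq (hB : IsBase R Δ coeff) {α β : E} (hα : α ∈ R.roots)
    (hβ : β ∈ R.roots) (h : ∀ γ ∈ Δ, coeff α γ = coeff β γ) : α = β := by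
  rw [hB.2.2.1 α hα, hB.2.2.1 β hβ]
  exact Finset.sum_congr rfl (fun γ hγ => by rw [h γ hγ])

lemma root_refl_mem (R : RRS E) {α β : E} (hα : α ∈ R.roots) (hβ : β ∈ R.roots) :
    reflMap α β ∈ R.roots := R.reflect_mem α hα β hβ

lemma wordMap_mem (R : RRS E) {m : List E} (hm : ∀ γ ∈ m, γ ∈ R.roots) {x : E}
    (hx : x ∈ R.roots) : wordMap m x ∈ R.roots := by
  induction m generalizing x with
  | nil => simpa
  | cons a m ih =>
    rw [wordMap_cons]
    exact ih (fun γ h => hm γ (by simp [h])) (root_refl_mem R (hm a (by simp)) hx)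

lemma not_isPos_neg_of_isPos (hB : IsBase R Δ coeff) {α : E} (hα : α ∈ R.roots)
    (hpos : IsPos Δ coeff α) : ¬ IsPos Δ coeff (-α) := by
  intro hneg
  apply R.ne_zero α hα
  have hz : ∀ γ ∈ Δ, coeff α γ = 0 := by
    intro γ hγ
    have := hneg γ hγ
    rw [coeff_neg hB hα hγ] at this
    have := hpos γ hγ
    omega
  rw [hB.2.2.1 α hα]
  apply Finset.sum_eq_zero
  intro γ hγ
  rw [hz γ hγ]
  simp

lemma coeff_reflMap_simple (hB : IsBase R Δ coeff) {γ : E} (hγ : γ ∈ Δ) {β : E}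
    (hβ : β ∈ R.roots) {δ : E} (hδ : δ ∈ Δ) (hne : δ ≠ γ) :
    coeff (reflMap γ β) δ = coeff β δ := by
  obtain ⟨n, hn⟩ := R.pairing_int γ (hB.1 hγ) β hβ
  have hrefl : reflMap γ β = ∑ δ ∈ Δ, ((coeff β δ : ℝ) - (if δ = γ then (n:ℝ) else 0)) • δ := by
    have h1 : ∑ δ ∈ Δ, ((coeff β δ : ℝ) - (if δ = γ then (n:ℝ) else 0)) • δ
        = (∑ δ ∈ Δ, ((coeff β δ : ℝ)) • δ) - ∑ δ ∈ Δ, (if δ = γ then (n:ℝ) else 0) • δ := by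
      simp [sub_smul, Finset.sum_sub_distrib]
    have h2 : ∑ δ ∈ Δ, (if δ = γ then (n:ℝ) else 0) • δ = (n:ℝ) • γ := by
      simp [ite_smul, Finset.sum_ite_eq' Δ γ, hγ]
    rw [h1, h2, ← hB.2.2.1 β hβ]
    show β - pairR β γ • γ = β - (n : ℝ) • γ
    rw [pairR, hn]
  have := coeff_unique hB (root_refl_mem R (hB.1 hγ) hβ) _ hrefl δ hδ
  simp only [hne, if_false, sub_zero] at this
  exact_mod_cast this.symm

/-- simple reflections keep positive roots other than the simple root itself positive -/
lemma simple_refl_pos (hB : IsBase R Δ coeff) {γ : E} (hγ : γ ∈ Δ) {β : E}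
    (hβ : β ∈ R.roots) (hpos : IsPos Δ coeff β) (hne : β ≠ γ) :
    IsPos Δ coeff (reflMap γ β) := by
  have hmem : reflMap γ β ∈ R.roots := root_refl_mem R (hB.1 hγ) hβ
  rcases hB.2.2.2 _ hmem with h | h
  · exact h
  · -- all coeffs of reflMap γ β nonpositive; coeffs at δ ≠ γ agree with β's
    exfalso
    have hz : ∀ δ ∈ Δ, δ ≠ γ → coeff β δ = 0 := by
      intro δ hδ hneδ
      have h1 := h δ hδ
      rw [coeff_reflMap_simple hB hγ hβ hδ hneδ] at h1
      have := hpos δ hδ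
      omega
    -- then β = coeff β γ • γ
    have hrepr : β = (coeff β γ : ℝ) • γ := by
      conv_lhs => rw [hB.2.2.1 β hβ]
      exact Finset.sum_eq_single_of_mem γ hγ (fun δ hδ hneδ => by rw [hz δ hδ hneδ]; simp)
    rcases R.reduced γ (hB.1 hγ) (coeff β γ : ℝ) (by rw [← hrepr]; exact hβ) with h1 | h1
    · apply hne
      rw [hrepr, h1, one_smul]
    · -- β = -γ contradicts positivity
      have : coeff β γ = -1 := by exact_mod_cast h1
      have := hpos γ hγ
      omega

end BaseLemmas

section Chain

variable {R : RRS E} {Δ : Finset E} {coeff : E → E → ℤ}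

lemma base_ne_zero (hB : IsBase R Δ coeff) {γ : E} (hγ : γ ∈ Δ) : γ ≠ 0 :=
  R.ne_zero γ (hB.1 hγ)

lemma neg_chain_split (hB : IsBase R Δ coeff) {v : List E} (hv : ∀ γ ∈ v, γ ∈ Δ) {δ : E}
    (hδ : δ ∈ Δ) (hneg : ¬ IsPos Δ coeff (wordMap v.reverse δ)) :
    ∃ k, ∃ hk : k < v.length, wordMap (v.drop (k+1)).reverse δ = v[k]'hk := by
  induction v with
  | nil => exact absurd (isPos_simple hB hδ) (by simpa using hneg)
  | cons a w ih =>
    have ha : a ∈ Δ := hv a (by simp)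
    have hw' : ∀ γ ∈ w, γ ∈ Δ := fun γ h => hv γ (by simp [h])
    have hmem : wordMap w.reverse δ ∈ R.roots :=
      wordMap_mem R (fun γ h => hB.1 (hw' γ (List.mem_reverse.mp h))) (hB.1 hδ)
    by_cases hp : IsPos Δ coeff (wordMap w.reverse δ)
    · have h1 : wordMap (a::w).reverse δ = reflMap a (wordMap w.reverse δ) := by
        rw [List.reverse_cons, wordMap_append, wordMap_singleton]
      rw [h1] at hneg
      have heq : wordMap w.reverse δ = a := by
        by_contra hne
        exact hneg (simple_refl_pos hB ha hmem hp hne)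
      exact ⟨0, by simp, by simpa using heq⟩
    · obtain ⟨k, hk, hkey⟩ := ih hw' hp
      exact ⟨k+1, by simpa using Nat.succ_lt_succ hk, by simpa [List.drop_succ_cons] using hkey⟩

lemma del_contra (hB : IsBase R Δ coeff) {θ : E} {l : List E} (hl : ∀ γ ∈ l, γ ∈ Δ)
    (hw : ∀ x, wordMap l x = reflMap θ x)
    (hred : ∀ l' : List E, (∀ γ ∈ l', γ ∈ Δ) → (∀ x, wordMap l' x = reflMap θ x) →
        l.length ≤ l'.length)
    {k j : ℕ} (hkj : k < j) (hj : j < l.length)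
    (key : wordMap ((l.take j).drop (k+1)).reverse (l[j]'hj) = l[k]'(lt_trans hkj hj)) :
    False := by
  have hk : k < l.length := lt_trans hkj hj
  set B := (l.take j).drop (k+1) with hBdef
  have hBsub : ∀ γ ∈ B, γ ∈ Δ := fun γ h => hl γ (List.take_subset _ _ (List.drop_subset _ _ h))
  have hB0 : ∀ γ ∈ B, γ ≠ 0 := fun γ h => base_ne_zero hB (hBsub γ h)
  have e1 : (l.take j).take (k+1) = l.take (k+1) := by rw [List.take_take]; congr 1; omega
  have e2 : l.take j = l.take (k+1) ++ B := by
    conv_lhs => rw [← List.take_append_drop (k+1) (l.take j)]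
    rw [e1]
  have e3 : l.take (k+1) = l.take k ++ [l[k]'hk] := by
    rw [← List.take_concat_get hk, List.concat_eq_append]
  have e4 : l = l.take j ++ ([l[j]'hj] ++ l.drop (j+1)) := by
    conv_lhs => rw [← List.take_append_drop j l, List.drop_eq_getElem_cons hj]
    simp
  have hdecomp : l = l.take k ++ [l[k]'hk] ++ B ++ [l[j]'hj] ++ l.drop (j+1) := by
    conv_lhs => rw [e4, e2, e3]
    simp [List.append_assoc]
  have hword : ∀ x, wordMap (l.take k ++ B ++ l.drop (j+1)) x = reflMap θ x := by
    intro x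
    rw [← deletion (l.take k) B (l.drop (j+1)) hB0 _ _
        (base_ne_zero hB (hl _ (List.getElem_mem hk)))
        (base_ne_zero hB (hl _ (List.getElem_mem hj))) key x, ← hdecomp]
    exact hw x
  have hsub' : ∀ γ ∈ l.take k ++ B ++ l.drop (j+1), γ ∈ Δ := by
    intro γ h
    rcases List.mem_append.mp h with h | h
    · rcases List.mem_append.mp h with h | h
      · exact hl γ (List.take_subset _ _ h)
      · exact hBsub γ h
    · exact hl γ (List.drop_subset _ _ h)
  have hle := hred _ hsub' hword
  have hlen1 : (l.take k ++ B ++ l.drop (j+1)).length = l.length - 2 := by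
    simp only [hBdef, List.length_append, List.length_take, List.length_drop]
    omega
  omega

lemma chainRoot_eq {l : List E} {i : ℕ} (hi : i < l.length) :
    chainRoot l i = wordMap (l.take i).reverse (l[i]'hi) := by
  rw [chainRoot, List.getD_eq_getElem l 0 hi]

lemma chain_mem (hB : IsBase R Δ coeff) {l : List E} (hl : ∀ γ ∈ l, γ ∈ Δ) {i : ℕ}
    (hi : i < l.length) : chainRoot l i ∈ R.roots := by
  rw [chainRoot_eq hi]
  exact wordMap_mem R
    (fun γ h => hB.1 (hl γ (List.take_subset _ _ (List.mem_reverse.mp h))))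
    (hB.1 (hl _ (List.getElem_mem hi)))

lemma chain_pos (hB : IsBase R Δ coeff) {θ : E} {l : List E} (hl : ∀ γ ∈ l, γ ∈ Δ)
    (hw : ∀ x, wordMap l x = reflMap θ x)
    (hred : ∀ l' : List E, (∀ γ ∈ l', γ ∈ Δ) → (∀ x, wordMap l' x = reflMap θ x) →
        l.length ≤ l'.length)
    {j : ℕ} (hj : j < l.length) : IsPos Δ coeff (chainRoot l j) := by
  by_contra hneg
  rw [chainRoot_eq hj] at hneg
  obtain ⟨k, hk, hkey⟩ := neg_chain_split hB
    (fun γ h => hl γ (List.take_subset _ _ h)) (hl _ (List.getElem_mem hj)) hneg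
  have hkj : k < j := by
    have := hk
    simp only [List.length_take] at this
    omega
  have hgetk : (l.take j)[k]'hk = l[k]'(lt_trans hkj hj) := List.getElem_take
  rw [hgetk] at hkey
  exact del_contra hB hl hw hred hkj hj hkey

lemma chain_inj (hB : IsBase R Δ coeff) {θ : E} {l : List E} (hl : ∀ γ ∈ l, γ ∈ Δ)
    (hw : ∀ x, wordMap l x = reflMap θ x)
    (hred : ∀ l' : List E, (∀ γ ∈ l', γ ∈ Δ) → (∀ x, wordMap l' x = reflMap θ x) →
        l.length ≤ l'.length)
    {i j : ℕ} (hij : i < j) (hj : j < l.length) : chainRoot l i ≠ chainRoot l j := by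
  intro heq
  have hi : i < l.length := lt_trans hij hj
  set M := (l.take j).drop (i+1) with hMdef
  have hMsub : ∀ γ ∈ M, γ ∈ Δ := fun γ h => hl γ (List.take_subset _ _ (List.drop_subset _ _ h))
  have e1 : (l.take j).take (i+1) = l.take (i+1) := by rw [List.take_take]; congr 1; omega
  have e2 : l.take j = l.take (i+1) ++ M := by
    conv_lhs => rw [← List.take_append_drop (i+1) (l.take j)]
    rw [e1]
  have e3 : l.take (i+1) = l.take i ++ [l[i]'hi] := by
    rw [← List.take_concat_get hi, List.concat_eq_append]
  have hrev : (l.take j).reverse = M.reverse ++ ([l[i]'hi] ++ (l.take i).reverse) := by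
    rw [e2, e3, List.reverse_append, List.reverse_append]
    simp
  have hchainj : chainRoot l j
      = wordMap (l.take i).reverse (reflMap (l[i]'hi) (wordMap M.reverse (l[j]'hj))) := by
    rw [chainRoot_eq hj, hrev, wordMap_append, wordMap_append, wordMap_singleton]
  have h0 : ∀ γ ∈ l.take i, γ ≠ 0 :=
    fun γ h => base_ne_zero hB (hl γ (List.take_subset _ _ h))
  have h1 : l[i]'hi = reflMap (l[i]'hi) (wordMap M.reverse (l[j]'hj)) := by
    have happ := congrArg (wordMap (l.take i)) (heq.trans hchainj)
    rw [chainRoot_eq hi] at happ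
    rwa [wordMap_word_rev _ h0, wordMap_word_rev _ h0] at happ
  have hi0 : (l[i]'hi) ≠ 0 := base_ne_zero hB (hl _ (List.getElem_mem hi))
  have h2 : wordMap M.reverse (l[j]'hj) = - (l[i]'hi) := by
    have := congrArg (reflMap (l[i]'hi)) h1
    rwa [reflMap_invol _ hi0, reflMap_root_self _ hi0, eq_comm] at this
  have hneg : ¬ IsPos Δ coeff (wordMap M.reverse (l[j]'hj)) := by
    rw [h2]
    exact not_isPos_neg_of_isPos hB (hB.1 (hl _ (List.getElem_mem hi)))
      (isPos_simple hB (hl _ (List.getElem_mem hi)))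
  obtain ⟨k, hk, hkey⟩ := neg_chain_split hB hMsub (hl _ (List.getElem_mem hj)) hneg
  have hMlen : M.length = j - (i+1) := by
    simp only [hMdef, List.length_drop, List.length_take]
    omega
  have hk' : i + 1 + k < j := by omega
  have hdropM : M.drop (k+1) = (l.take j).drop ((i+1+k)+1) := by
    rw [hMdef, List.drop_drop]
    congr 1
  have hgetM : M[k]'hk = l[i+1+k]'(lt_trans hk' hj) := by
    have hq : M[k]? = l[i+1+k]? := by
      simp [hMdef, List.getElem?_drop, List.getElem?_take, hk']
    rw [List.getElem?_eq_getElem hk, List.getElem?_eq_getElem (lt_trans hk' hj)] at hq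
    exact Option.some_injective _ hq
  rw [hdropM, hgetM] at hkey
  exact del_contra hB hl hw hred hk' hj hkey

lemma pal_identity (hB : IsBase R Δ coeff) {θ : E} {l : List E} {p : ℕ}
    (hlength : l.length = 2 * p + 1) (hl : ∀ γ ∈ l, γ ∈ Δ) (hpal : l.reverse = l)
    (hw : ∀ x, wordMap l x = reflMap θ x) {i : ℕ} (hi : i ≤ 2 * p) :
    reflMap θ (chainRoot l (2 * p - i)) = - chainRoot l i := by
  set j := 2 * p - i with hjdef
  have hj : j < l.length := by omega
  have hi' : i < l.length := by omega
  have h0 : ∀ γ ∈ l.take j, γ ≠ 0 :=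
    fun γ h => base_ne_zero hB (hl γ (List.take_subset _ _ h))
  have hj0 : (l[j]'hj) ≠ 0 := base_ne_zero hB (hl _ (List.getElem_mem hj))
  have e4 : l = l.take j ++ ((l[j]'hj) :: l.drop (j+1)) := by
    conv_lhs => rw [← List.take_append_drop j l, List.drop_eq_getElem_cons hj]
  have hdropeq : l.drop (j+1) = (l.take i).reverse := by
    have h1 : List.take i l.reverse = (l.drop (l.length - i)).reverse := List.take_reverse
    rw [hpal] at h1
    have h2 : l.length - i = j + 1 := by omega
    rw [h2] at h1
    rw [h1, List.reverse_reverse]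
  have hgetEq : (l[j]'hj) = l[i]'hi' := by
    have h1 : l[j]? = l[i]? := by
      conv_rhs => rw [← hpal]
      rw [List.getElem?_reverse hi']
      congr 1
      omega
    rw [List.getElem?_eq_getElem hj, List.getElem?_eq_getElem hi'] at h1
    exact Option.some_injective _ h1
  calc reflMap θ (chainRoot l j) = wordMap l (chainRoot l j) := (hw _).symm
    _ = wordMap (l.take j ++ ((l[j]'hj) :: l.drop (j+1))) (chainRoot l j) := by rw [← e4]
    _ = wordMap ((l[j]'hj) :: l.drop (j+1)) (wordMap (l.take j) (chainRoot l j)) :=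
        wordMap_append _ _ _
    _ = wordMap (l.drop (j+1)) (reflMap (l[j]'hj) (l[j]'hj)) := by
        rw [chainRoot_eq hj, wordMap_word_rev _ h0, wordMap_cons]
    _ = - wordMap ((l.take i).reverse) (l[i]'hi') := by
        rw [reflMap_root_self _ hj0, wordMap_neg, hdropeq, hgetEq]
    _ = - chainRoot l i := by rw [chainRoot_eq hi']

end Chain

section Main

variable {R : RRS E} {Δ : Finset E} {coeff : E → E → ℤ}

lemma base_nonempty (hB : IsBase R Δ coeff) : Δ.Nonempty := by
  by_contra h
  rw [Finset.not_nonempty_iff_eq_empty] at h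
  obtain ⟨α, hα⟩ := R.nonempty
  apply R.ne_zero α hα
  rw [hB.2.2.1 α hα, h, Finset.sum_empty]

lemma coeff_highest_pos (hB : IsBase R Δ coeff) {θ : E}
    (hθhigh : ∀ α ∈ R.roots, ∀ γ ∈ Δ, coeff α γ ≤ coeff θ γ) {γ : E} (hγ : γ ∈ Δ) :
    1 ≤ coeff θ γ := by
  have := hθhigh γ (hB.1 hγ) γ hγ
  rw [coeff_simple_self hB hγ] at this
  exact this

lemma exists_coeff_pos (hB : IsBase R Δ coeff) {α : E} (hα : α ∈ R.roots)
    (hpos : IsPos Δ coeff α) : ∃ γ ∈ Δ, 1 ≤ coeff α γ := by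
  by_contra h
  push_neg at h
  apply R.ne_zero α hα
  rw [hB.2.2.1 α hα]
  apply Finset.sum_eq_zero
  intro γ hγ
  have h1 := hpos γ hγ
  have h2 := h γ hγ
  have : coeff α γ = 0 := by omega
  rw [this]
  simp

theorem stmt7' (R : RRS E) (Δ : Finset E) (coeff : E → E → ℤ) (hB : IsBase R Δ coeff)
    (θ : E) (hθmem : θ ∈ R.roots)
    (hθhigh : ∀ α ∈ R.roots, ∀ γ ∈ Δ, coeff α γ ≤ coeff θ γ)
    (p : ℕ) (l : List E) (hlength : l.length = 2 * p + 1) (hl : ∀ γ ∈ l, γ ∈ Δ)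
    (hpal : l.reverse = l)
    (hw : ∀ x, wordMap l x = reflMap θ x)
    (hred : ∀ l' : List E, (∀ γ ∈ l', γ ∈ Δ) → (∀ x, wordMap l' x = reflMap θ x) →
        l.length ≤ l'.length) :
    chainRoot l p = θ ∧
    ∀ i < l.length, i ≠ p → chainRoot l (2 * p - i) = θ - chainRoot l i := by
  have hθpos : IsPos Δ coeff θ := by
    intro γ hγ
    have := coeff_highest_pos hB hθhigh hγ
    omega
  -- the sum identity : for i ≤ 2p, chainRoot l i + chainRoot l (2p - i) = pairR .. • θ
  have hsum : ∀ i : ℕ, i ≤ 2 * p →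
      chainRoot l i + chainRoot l (2 * p - i)
        = pairR (chainRoot l (2 * p - i)) θ • θ := by
    intro i hi
    have hid := pal_identity hB hlength hl hpal hw hi
    rw [reflMap] at hid
    have := congrArg (fun x => x + chainRoot l i + pairR (chainRoot l (2*p-i)) θ • θ) hid
    beta_reduce at this
    rw [sub_add_eq_add_sub] at this
    abel_nf at this ⊢
    linear_combination (norm := module) this
  -- part 1 : chainRoot l p = θ
  have hpmem : chainRoot l p ∈ R.roots := chain_mem hB hl (by omega)
  have hppos : IsPos Δ coeff (chainRoot l p) := chain_pos hB hl hw hred (by omega)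
  have hpp : 2 * p - p = p := by omega
  have hmid : chainRoot l p = θ := by
    have h1 := hsum p (by omega)
    rw [hpp] at h1
    obtain ⟨m, hm⟩ := R.pairing_int θ hθmem (chainRoot l p) hpmem
    have hmR : pairR (chainRoot l p) θ = (m : ℝ) := hm
    rw [hmR] at h1
    have h2 : chainRoot l p = ((m : ℝ)/2) • θ := by
      have h3 : (2:ℝ) • chainRoot l p = (m:ℝ) • θ := by
        rw [two_smul]; exact h1
      calc chainRoot l p = ((2:ℝ)⁻¹ * 2) • chainRoot l p := by norm_num
        _ = (2:ℝ)⁻¹ • ((2:ℝ) • chainRoot l p) := by rw [mul_smul]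
        _ = (2:ℝ)⁻¹ • ((m:ℝ) • θ) := by rw [h3]
        _ = ((m : ℝ)/2) • θ := by rw [smul_smul]; ring_nf
    rcases R.reduced θ hθmem ((m:ℝ)/2) (h2 ▸ hpmem) with hc | hc
    · rw [h2, hc, one_smul]
    · exfalso
      have hθneg : chainRoot l p = -θ := by rw [h2, hc, neg_one_smul]
      have := not_isPos_neg_of_isPos hB hθmem hθpos
      rw [← hθneg] at this
      exact this hppos
  refine ⟨hmid, ?_⟩
  intro i hilen hip
  have hi : i ≤ 2 * p := by omega
  set j := 2 * p - i with hjdef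
  have hjlen : j < l.length := by omega
  have hαmem : chainRoot l i ∈ R.roots := chain_mem hB hl hilen
  have hα'mem : chainRoot l j ∈ R.roots := chain_mem hB hl hjlen
  have hαpos : IsPos Δ coeff (chainRoot l i) := chain_pos hB hl hw hred hilen
  have hα'pos : IsPos Δ coeff (chainRoot l j) := chain_pos hB hl hw hred hjlen
  have hαneθ : chainRoot l i ≠ θ := by
    rw [← hmid]
    rcases lt_or_gt_of_ne hip with h | h
    · exact chain_inj hB hl hw hred h (by omega)
    · exact (chain_inj hB hl hw hred h hilen).symm
  obtain ⟨m, hm⟩ := R.pairing_int θ hθmem (chainRoot l j) hα'mem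
  have h1 := hsum i hi
  rw [← hjdef] at h1
  rw [show pairR (chainRoot l j) θ = (m:ℝ) from hm] at h1
  -- coefficient equation
  have hcoeff : ∀ γ ∈ Δ, coeff (chainRoot l i) γ + coeff (chainRoot l j) γ
      = m * coeff θ γ := by
    intro γ hγ
    have hs : ∑ γ ∈ Δ, ((coeff (chainRoot l i) γ : ℝ) + (coeff (chainRoot l j) γ : ℝ)) • γ
        = ∑ γ ∈ Δ, ((m : ℝ) * (coeff θ γ : ℝ)) • γ := by
      simp only [add_smul, Finset.sum_add_distrib]
      rw [← hB.2.2.1 _ hαmem, ← hB.2.2.1 _ hα'mem, h1]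
      conv_lhs => rw [hB.2.2.1 θ hθmem]
      rw [Finset.smul_sum]
      simp only [smul_smul]
    have := sum_eq_coeff hB _ _ hs γ hγ
    exact_mod_cast this
  obtain ⟨γ₀, hγ₀, hcγ₀⟩ := exists_coeff_pos hB hαmem hαpos
  have hθγ₀ : 1 ≤ coeff θ γ₀ := coeff_highest_pos hB hθhigh hγ₀
  have hm1 : 1 ≤ m := by
    have h2 := hcoeff γ₀ hγ₀
    have h3 := hα'pos γ₀ hγ₀
    nlinarith
  have hm2 : m < 2 := by
    by_contra h2
    push_neg at h2
    apply hαneθ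
    apply root_eq_of_coeff_eq hB hαmem hθmem
    intro γ hγ
    have h3 := hcoeff γ hγ
    have h4 := hθhigh (chainRoot l i) hαmem γ hγ
    have h5 := hθhigh (chainRoot l j) hα'mem γ hγ
    have h6 := coeff_highest_pos hB hθhigh hγ
    nlinarith
  have hm : m = 1 := by omega
  rw [hm] at h1
  simp only [Int.cast_one, one_smul] at h1
  rw [eq_sub_iff_add_eq, add_comm]
  exact h1

/-- for a symmetric reduced decomposition of `s_θ` (with `Λ = 2` or simply
laced), the chain `α^(−p), …, α^(p)` of positive roots made negative by `s_θ` satisfies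
`α^(0) = θ` and `α^(−i) = θ − α^(i)` for `i ≠ 0`.  Indices are shifted by `p`, so the
paper's `α^(i)` is `chainRoot l (i + p)` and the partner of index `i` is `2p − i`. -/
theorem stmt7 (R : RRS E) (Δ : Finset E) (coeff : E → E → ℤ) (hB : IsBase R Δ coeff)
    (a : ℝ) (ha : 0 < a)
    (hlen : (∀ α ∈ R.roots, ∀ β ∈ R.roots, ⟪α, α⟫ = ⟪β, β⟫) ∨
            (∀ α ∈ R.roots, ⟪α, α⟫ = a ∨ ⟪α, α⟫ = 2 * a))
    (θ : E) (hθmem : θ ∈ R.roots)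
    (hθhigh : ∀ α ∈ R.roots, ∀ γ ∈ Δ, coeff α γ ≤ coeff θ γ)
    (p : ℕ) (l : List E) (hlength : l.length = 2 * p + 1) (hl : ∀ γ ∈ l, γ ∈ Δ)
    (hpal : l.reverse = l)
    (hw : ∀ x, wordMap l x = reflMap θ x)
    (hred : ∀ l' : List E, (∀ γ ∈ l', γ ∈ Δ) → (∀ x, wordMap l' x = reflMap θ x) →
        l.length ≤ l'.length) :
    chainRoot l p = θ ∧
    ∀ i < l.length, i ≠ p → chainRoot l (2 * p - i) = θ - chainRoot l i :=
  stmt7' R Δ coeff hB θ hθmem hθhigh p l hlength hl hpal hw hred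

end Main

end
end
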